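/- arXiv:2509.07573 — 4 statements merged into one kernel-verified Lean document; each statement's English description precedes it below -/
import Mathlib

section
/- Let D ≥ 3 and let μ be the Haar probability measure on SO(D). Call a function M(U) = Π_{t=1}^{m} U_{i_t j_t} · U_{i'_t j'_t} (a product of m entries of U and m further entries of U, corresponding to a balanced monomial of degree m since U is real) a balanced monomial of degree m. Let ν be a probability measure on SO(D) that is an ε-approximate k-design with respect to μ, meaning |E_{U∼ν}[M(U)] − E_{U∼μ}[M(U)]| ≤ ε/D^k for every balanced monomial M of degree at most k. Let f(U) = Σ_i α_i M_i(U) be a real-valued function where each M_i is a balanced monomial of degree K, and set α = Σ_i |α_i|. Suppose there are constants C, a > 0 such that Pr_{U∼μ}[|f(U) − E_{U∼μ}[f(U)]| ≥ δ] ≤ C·exp(−aδ²) for every δ > 0. Then for every positive integer m with 2mK ≤ k and every δ > 0, Pr_{U∼ν}[|f(U) − E_{U∼μ}[f(U)]| ≥ δ] ≤ δ^{−2m}·( C·(m/a)^m + (ε/D^k)·(α + |E_{U∼μ}[f(U)]|)^{2m} ). -/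
/-!
Large-deviation bounds carry over from the Haar measure on `SO(D)` to ε-approximate k-designs:
if `f = Σ_i α_i M_i` is a sum of balanced monomials of degree `K` in the matrix entries,
`α = Σ_i |α_i|`, and `Pr_{U∼μ}[|f(U) − E_μ f| ≥ δ] ≤ C exp(−aδ²)` for the Haar measure `μ`,
then for an ε-approximate k-design `ν` and any integer `m ≥ 1` with `2mK ≤ k`,
`Pr_{U∼ν}[|f(U) − E_μ f| ≥ δ] ≤ δ^{−2m} (C (m/a)^m + (ε/D^k)(α + |E_μ f|)^{2m})`.
-/

open MeasureTheory Matrix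

noncomputable instance matrixMeasurableSpace (m n α : Type*) [MeasurableSpace α] :
    MeasurableSpace (Matrix m n α) :=
  (inferInstance : MeasurableSpace (m → n → α))

/-- A balanced monomial of degree `m` in the entries of a (real) special orthogonal matrix:
a product of `m` entries of `U` together with `m` further entries of `U` (the complex
conjugation occurring in the general definition is trivial since `U` is real). -/
def IsBalancedMonomial {D : ℕ} (m : ℕ)
    (M : Matrix.specialOrthogonalGroup (Fin D) ℝ → ℝ) : Prop :=
  ∃ p q : Fin m → Fin D × Fin D, ∀ U : Matrix.specialOrthogonalGroup (Fin D) ℝ,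
    M U = (∏ t, U.1 (p t).1 (p t).2) * (∏ t, U.1 (q t).1 (q t).2)

open Set in
lemma SO_entry_abs_le {D : ℕ} (U : Matrix.specialOrthogonalGroup (Fin D) ℝ)
    (i j : Fin D) : |U.1 i j| ≤ 1 := by
  have h1 : star U.1 * U.1 = 1 :=
    (Matrix.mem_orthogonalGroup_iff' (Fin D) ℝ).mp
      ((Matrix.mem_specialOrthogonalGroup_iff).mp U.2).1
  have h2 : ∑ kk : Fin D, U.1 kk j * U.1 kk j = 1 := by
    have h3 : (star U.1 * U.1) j j = (1 : Matrix (Fin D) (Fin D) ℝ) j j := by rw [h1]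
    simpa [Matrix.mul_apply, Matrix.one_apply, Matrix.star_apply] using h3
  rw [abs_le_one_iff_mul_self_le_one]
  calc U.1 i j * U.1 i j ≤ ∑ kk : Fin D, U.1 kk j * U.1 kk j :=
        Finset.single_le_sum (f := fun kk => U.1 kk j * U.1 kk j)
          (fun kk _ => mul_self_nonneg _) (Finset.mem_univ i)
    _ = 1 := h2

lemma SO_entry_measurable {D : ℕ} (i j : Fin D) :
    Measurable (fun U : Matrix.specialOrthogonalGroup (Fin D) ℝ => U.1 i j) := by
  have h1 : Measurable (fun x : Matrix (Fin D) (Fin D) ℝ => x i j) :=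
    (measurable_pi_apply j).comp (measurable_pi_apply i)
  exact h1.comp measurable_subtype_coe

lemma bm_measurable {D m : ℕ} {M : Matrix.specialOrthogonalGroup (Fin D) ℝ → ℝ}
    (h : IsBalancedMonomial m M) : Measurable M := by
  obtain ⟨p, q, hpq⟩ := h
  have : M = fun U => (∏ t, U.1 (p t).1 (p t).2) * (∏ t, U.1 (q t).1 (q t).2) := funext hpq
  rw [this]
  exact (Finset.measurable_prod _ fun t _ => SO_entry_measurable _ _).mul
    (Finset.measurable_prod _ fun t _ => SO_entry_measurable _ _)

lemma bm_abs_le_one {D m : ℕ} {M : Matrix.specialOrthogonalGroup (Fin D) ℝ → ℝ}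
    (h : IsBalancedMonomial m M) (U : Matrix.specialOrthogonalGroup (Fin D) ℝ) :
    |M U| ≤ 1 := by
  obtain ⟨p, q, hpq⟩ := h
  rw [hpq U, abs_mul, Finset.abs_prod, Finset.abs_prod]
  have h1 : ∀ (r : Fin m → Fin D × Fin D), ∏ t, |U.1 (r t).1 (r t).2| ≤ 1 :=
    fun r => Finset.prod_le_one (fun t _ => abs_nonneg _) (fun t _ => SO_entry_abs_le U _ _)
  calc (∏ t, |U.1 (p t).1 (p t).2|) * ∏ t, |U.1 (q t).1 (q t).2|
      ≤ 1 * 1 := mul_le_mul (h1 p) (h1 q) (Finset.prod_nonneg fun t _ => abs_nonneg _) zero_le_one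
    _ = 1 := mul_one 1

lemma bm_congr {D m : ℕ} {M M' : Matrix.specialOrthogonalGroup (Fin D) ℝ → ℝ}
    (h : ∀ U, M U = M' U) (h' : IsBalancedMonomial m M') : IsBalancedMonomial m M := by
  obtain ⟨p, q, hpq⟩ := h'
  exact ⟨p, q, fun U => (h U).trans (hpq U)⟩

lemma bm_one {D : ℕ} : IsBalancedMonomial (D := D) 0 (fun _ => 1) :=
  ⟨Fin.elim0, Fin.elim0, fun U => by simp⟩

lemma bm_mul {D m₁ m₂ : ℕ} {M₁ M₂ : Matrix.specialOrthogonalGroup (Fin D) ℝ → ℝ}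
    (h₁ : IsBalancedMonomial m₁ M₁) (h₂ : IsBalancedMonomial m₂ M₂) :
    IsBalancedMonomial (m₁ + m₂) (fun U => M₁ U * M₂ U) := by
  obtain ⟨p₁, q₁, hp₁⟩ := h₁
  obtain ⟨p₂, q₂, hp₂⟩ := h₂
  refine ⟨Fin.append p₁ p₂, Fin.append q₁ q₂, fun U => ?_⟩
  show M₁ U * M₂ U = _
  rw [hp₁ U, hp₂ U, Fin.prod_univ_add, Fin.prod_univ_add]
  simp only [Fin.append_left, Fin.append_right]
  ring

lemma bm_prod {D : ℕ} {κ : Type*} (d : κ → ℕ)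
    (N : κ → (Matrix.specialOrthogonalGroup (Fin D) ℝ → ℝ))
    (hN : ∀ j, IsBalancedMonomial (d j) (N j)) :
    ∀ (n : ℕ) (s : Fin n → κ),
      IsBalancedMonomial (∑ t, d (s t)) (fun U => ∏ t, N (s t) U)
  | 0, s => by
    refine bm_congr (fun U => ?_) (bm_one (D := D))
    simp
  | n + 1, s => by
    have ih := bm_prod d N hN n (fun t => s t.succ)
    have h := bm_mul (hN (s 0)) ih
    have hdeg : ∑ t : Fin (n+1), d (s t) = d (s 0) + ∑ t : Fin n, d (s t.succ) :=
      Fin.sum_univ_succ _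
    rw [hdeg]
    exact bm_congr (fun U => Fin.prod_univ_succ _) h

open Set Real in
lemma moment_bound {Ω : Type*} [MeasurableSpace Ω] (μ : Measure Ω) [IsProbabilityMeasure μ]
    (g : Ω → ℝ) (hg : Measurable g) (B : ℝ) (hgB : ∀ x, |g x| ≤ B)
    (C a : ℝ) (hC : 0 < C) (ha : 0 < a)
    (htail : ∀ δ : ℝ, 0 < δ → μ {x | δ ≤ |g x|} ≤ ENNReal.ofReal (C * Real.exp (-a * δ ^ 2)))
    (m : ℕ) (hm : 0 < m) :
    ∫ x, g x ^ (2 * m) ∂μ ≤ C * ((m : ℝ) / a) ^ m := by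
  have hp : (0 : ℝ) < 2 * m := by positivity
  have habs : ∀ x : Ω, g x ^ (2 * m) = |g x| ^ ((2 * m : ℕ) : ℝ) := by
    intro x
    rw [Real.rpow_natCast, ← abs_pow]
    exact (abs_of_nonneg ((even_two_mul m).pow_nonneg (g x))).symm
  -- layer cake
  have key := MeasureTheory.lintegral_rpow_eq_lintegral_meas_le_mul μ
    (f := fun x => |g x|) (ae_of_all _ fun x => abs_nonneg _)
    hg.abs.aemeasurable (p := ((2 * m : ℕ) : ℝ)) (by exact_mod_cast hp)
  -- bound the tail integral
  set p : ℝ := ((2 * m : ℕ) : ℝ) with hpdef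
  have hint : IntegrableOn (fun t : ℝ => t ^ (p - 1) * Real.exp (-a * t ^ (2:ℝ))) (Ioi 0) := by
    apply integrableOn_rpow_mul_exp_neg_mul_rpow (by simp [hpdef]; positivity) two_pos ha
  have hintC : IntegrableOn (fun t : ℝ => C * (t ^ (p - 1) * Real.exp (-a * t ^ (2:ℝ)))) (Ioi 0) :=
    hint.const_mul C
  have hval : ∫ t in Ioi (0:ℝ), t ^ (p - 1) * Real.exp (-a * t ^ (2:ℝ))
      = a ^ (-(p - 1 + 1) / 2) * (1 / 2) * Real.Gamma ((p - 1 + 1) / 2) := by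
    exact integral_rpow_mul_exp_neg_mul_rpow two_pos (by simp [hpdef]; positivity) ha
  -- monotone bound of the layer-cake integral
  have hmeas : Measurable (fun t : ℝ => ENNReal.ofReal (C * (t ^ (p - 1) * Real.exp (-a * t ^ (2:ℝ))))) := by
    fun_prop
  have hnn : 0 ≤ᵐ[volume.restrict (Ioi (0:ℝ))]
      (fun t : ℝ => C * (t ^ (p - 1) * Real.exp (-a * t ^ (2:ℝ)))) := by
    filter_upwards [ae_restrict_mem measurableSet_Ioi] with t ht
    have ht' : (0:ℝ) < t := ht
    simp only [Pi.zero_apply]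
    positivity
  have h2 : ∫⁻ t in Ioi (0:ℝ), μ {x | t ≤ |g x|} * ENNReal.ofReal (t ^ (p - 1))
      ≤ ENNReal.ofReal (∫ t in Ioi (0:ℝ), C * (t ^ (p - 1) * Real.exp (-a * t ^ (2:ℝ)))) := by
    rw [MeasureTheory.ofReal_integral_eq_lintegral_ofReal hintC hnn]
    refine setLIntegral_mono hmeas fun t ht => ?_
    have ht' : (0:ℝ) < t := ht
    calc μ {x | t ≤ |g x|} * ENNReal.ofReal (t ^ (p - 1))
        ≤ ENNReal.ofReal (C * Real.exp (-a * t ^ 2)) * ENNReal.ofReal (t ^ (p - 1)) :=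
          mul_le_mul_left (htail t ht') _
      _ = ENNReal.ofReal (C * (t ^ (p - 1) * Real.exp (-a * t ^ (2:ℝ)))) := by
          rw [← ENNReal.ofReal_mul (by positivity)]
          congr 1
          rw [show t ^ (2:ℝ) = t ^ 2 by rw [← Real.rpow_natCast t 2]; norm_num]
          ring
  -- evaluate the Gamma integral
  have hm1 : ((m - 1 : ℕ) : ℝ) + 1 = (m : ℝ) := by
    have := Nat.sub_add_cancel hm
    exact_mod_cast congrArg (Nat.cast (R := ℝ)) this
  have hp2 : (p - 1 + 1) / 2 = (m : ℝ) := by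
    simp only [sub_add_cancel, hpdef]
    push_cast; ring
  have hgamma : Real.Gamma ((p - 1 + 1) / 2) = ((m - 1).factorial : ℝ) := by
    rw [hp2, ← hm1]
    exact Real.Gamma_nat_eq_factorial (m - 1)
  have hrpow : a ^ (-(p - 1 + 1) / 2) = (a ^ m)⁻¹ := by
    rw [show -(p - 1 + 1) / 2 = -((p - 1 + 1) / 2) by ring, hp2,
      Real.rpow_neg ha.le, Real.rpow_natCast]
  have hval2 : ∫ t in Ioi (0:ℝ), C * (t ^ (p - 1) * Real.exp (-a * t ^ (2:ℝ)))
      = C * ((a ^ m)⁻¹ * (1 / 2) * ((m - 1).factorial : ℝ)) := by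
    rw [MeasureTheory.integral_const_mul, hval, hrpow, hgamma]
  -- the numeric bound
  have hnum : p * (C * ((a ^ m)⁻¹ * (1 / 2) * ((m - 1).factorial : ℝ))) ≤ C * ((m : ℝ) / a) ^ m := by
    have hfac : ((m.factorial : ℝ)) ≤ (m : ℝ) ^ m := by exact_mod_cast Nat.factorial_le_pow m
    have hmf : (m : ℝ) * ((m - 1).factorial : ℝ) = (m.factorial : ℝ) := by
      exact_mod_cast congrArg (Nat.cast (R := ℝ)) (Nat.mul_factorial_pred hm.ne')
    have : p * (C * ((a ^ m)⁻¹ * (1 / 2) * ((m - 1).factorial : ℝ)))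
        = C * ((m.factorial : ℝ) / a ^ m) := by
      rw [hpdef, ← hmf]; push_cast; field_simp
    rw [this, div_pow]
    gcongr
  -- put things together in ℝ≥0∞
  have hlin : ∫⁻ x, ENNReal.ofReal (|g x| ^ p) ∂μ ≤ ENNReal.ofReal (C * ((m : ℝ) / a) ^ m) := by
    rw [key]
    calc ENNReal.ofReal p * ∫⁻ t in Ioi (0:ℝ), μ {x | t ≤ |g x|} * ENNReal.ofReal (t ^ (p - 1))
        ≤ ENNReal.ofReal p *
            ENNReal.ofReal (∫ t in Ioi (0:ℝ), C * (t ^ (p - 1) * Real.exp (-a * t ^ (2:ℝ)))) :=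
          mul_le_mul_right h2 _
      _ = ENNReal.ofReal (p * ∫ t in Ioi (0:ℝ), C * (t ^ (p - 1) * Real.exp (-a * t ^ (2:ℝ)))) :=
          (ENNReal.ofReal_mul (by positivity)).symm
      _ ≤ ENNReal.ofReal (C * ((m : ℝ) / a) ^ m) := by
          apply ENNReal.ofReal_le_ofReal
          rw [hval2]
          exact hnum
  -- back to the Bochner integral
  have hietg : Integrable (fun x => g x ^ (2 * m)) μ := by
    refine (integrable_const (B ^ (2 * m))).mono' ((hg.pow_const _).aestronglyMeasurable)
      (ae_of_all _ fun x => ?_)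
    rw [Real.norm_eq_abs, abs_pow]
    exact pow_le_pow_left₀ (abs_nonneg _) (hgB x) _
  rw [MeasureTheory.integral_eq_lintegral_of_nonneg_ae
    (ae_of_all _ fun x => (even_two_mul m).pow_nonneg (g x)) hietg.aestronglyMeasurable]
  have hcongr : ∫⁻ x, ENNReal.ofReal (g x ^ (2 * m)) ∂μ
      = ∫⁻ x, ENNReal.ofReal (|g x| ^ p) ∂μ := by
    congr 1; funext x; rw [habs x]
  rw [hcongr]
  exact ENNReal.toReal_le_of_le_ofReal (by positivity) hlin

open Set in
theorem design_large_deviation_SO (D : ℕ) (hD : 3 ≤ D)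
    (μ ν : Measure (Matrix.specialOrthogonalGroup (Fin D) ℝ))
    [IsProbabilityMeasure μ] [μ.IsMulLeftInvariant] [IsProbabilityMeasure ν]
    (k K : ℕ) (ε : ℝ)
    -- `ν` is an ε-approximate k-design with respect to the Haar measure `μ`:
    (hdesign : ∀ m : ℕ, m ≤ k → ∀ M : Matrix.specialOrthogonalGroup (Fin D) ℝ → ℝ,
      IsBalancedMonomial m M →
        |(∫ U, M U ∂ν) - ∫ U, M U ∂μ| ≤ ε / (D : ℝ) ^ k)
    {ι : Type*} [Fintype ι] (α : ι → ℝ)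
    (M : ι → Matrix.specialOrthogonalGroup (Fin D) ℝ → ℝ)
    (hM : ∀ i, IsBalancedMonomial K (M i))
    (f : Matrix.specialOrthogonalGroup (Fin D) ℝ → ℝ)
    (hf : ∀ U, f U = ∑ i, α i * M i U)
    (A : ℝ) (hA : A = ∑ i, |α i|)
    (C a : ℝ) (hC : 0 < C) (ha : 0 < a)
    (htail : ∀ δ : ℝ, 0 < δ →
      μ {U | δ ≤ |f U - ∫ V, f V ∂μ|} ≤ ENNReal.ofReal (C * Real.exp (-a * δ ^ 2)))
    (m : ℕ) (hm : 0 < m) (hmk : 2 * m * K ≤ k) (δ : ℝ) (hδ : 0 < δ) :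
    ν {U | δ ≤ |f U - ∫ V, f V ∂μ|}
      ≤ ENNReal.ofReal ((1 / δ ^ (2 * m)) *
          (C * (m / a) ^ m + (ε / (D : ℝ) ^ k) * (A + |∫ V, f V ∂μ|) ^ (2 * m))) := by
  classical
  set c : ℝ := ∫ V, f V ∂μ with hc
  set g : Matrix.specialOrthogonalGroup (Fin D) ℝ → ℝ := fun U => f U - c with hgdef
  -- measurability and boundedness
  have hfm : Measurable f := by
    have hfe : f = fun U => ∑ i, α i * M i U := funext hf
    rw [hfe]
    exact Finset.measurable_sum _ fun i _ => measurable_const.mul (bm_measurable (hM i))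
  have hgm : Measurable g := hfm.sub measurable_const
  have hfb : ∀ U, |f U| ≤ A := by
    intro U
    rw [hf U, hA]
    refine (Finset.abs_sum_le_sum_abs _ _).trans (Finset.sum_le_sum fun i _ => ?_)
    rw [abs_mul]
    exact mul_le_of_le_one_right (abs_nonneg _) (bm_abs_le_one (hM i) U)
  have hgb : ∀ U, |g U| ≤ A + |c| := by
    intro U
    calc |g U| = |f U + (-c)| := by rw [hgdef]; ring_nf
      _ ≤ |f U| + |(-c)| := abs_add_le _ _
      _ ≤ A + |c| := by rw [abs_neg]; exact add_le_add_left (hfb U) _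
  -- nonnegativity of ε / D ^ k
  have hεk : 0 ≤ ε / (D : ℝ) ^ k := by
    have h0 := hdesign 0 (Nat.zero_le k) (fun _ => 1) bm_one
    have h1 : |(∫ _U, (1 : ℝ) ∂ν) - ∫ _U, (1 : ℝ) ∂μ| = 0 := by simp
    rw [h1] at h0
    exact h0
  -- the expansion of g ^ (2m) as balanced monomials
  set β : Option ι → ℝ := fun j => j.elim (-c) α with hβ
  set N : Option ι → (Matrix.specialOrthogonalGroup (Fin D) ℝ → ℝ) :=
    fun j => j.elim (fun _ => (1 : ℝ)) M with hN'
  set d : Option ι → ℕ := fun j => j.elim 0 (fun _ => K) with hd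
  have hN : ∀ j, IsBalancedMonomial (d j) (N j) := by
    rintro (_ | i)
    · exact bm_one
    · exact hM i
  have hgsum : ∀ U, g U = ∑ j : Option ι, β j * N j U := by
    intro U
    rw [Fintype.sum_option]
    simp only [hβ, hN', Option.elim]
    rw [hgdef]
    simp only [hf U]
    ring
  have hpow : ∀ U, g U ^ (2 * m)
      = ∑ s : Fin (2 * m) → Option ι, (∏ t, β (s t)) * ∏ t, N (s t) U := by
    intro U
    rw [hgsum U, Finset.sum_pow', Fintype.piFinset_univ]
    exact Finset.sum_congr rfl fun s _ => Finset.prod_mul_distrib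
  -- integrability facts
  have hNbm : ∀ s : Fin (2 * m) → Option ι,
      IsBalancedMonomial (∑ t, d (s t)) (fun U => ∏ t, N (s t) U) :=
    fun s => bm_prod d N hN (2 * m) s
  have hNint : ∀ (ρ : Measure (Matrix.specialOrthogonalGroup (Fin D) ℝ))
      [IsProbabilityMeasure ρ], ∀ s : Fin (2 * m) → Option ι,
      Integrable (fun U => ∏ t, N (s t) U) ρ := by
    intro ρ _ s
    refine (integrable_const (1 : ℝ)).mono'
      (bm_measurable (hNbm s)).aestronglyMeasurable (ae_of_all _ fun U => ?_)
    rw [Real.norm_eq_abs]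
    exact bm_abs_le_one (hNbm s) U
  have hgint : ∀ (ρ : Measure (Matrix.specialOrthogonalGroup (Fin D) ℝ))
      [IsProbabilityMeasure ρ], Integrable (fun U => g U ^ (2 * m)) ρ := by
    intro ρ _
    refine (integrable_const ((A + |c|) ^ (2 * m))).mono'
      ((hgm.pow_const _).aestronglyMeasurable) (ae_of_all _ fun U => ?_)
    rw [Real.norm_eq_abs, abs_pow]
    exact pow_le_pow_left₀ (abs_nonneg _) (hgb U) _
  have hsplit : ∀ (ρ : Measure (Matrix.specialOrthogonalGroup (Fin D) ℝ))
      [IsProbabilityMeasure ρ],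
      ∫ U, g U ^ (2 * m) ∂ρ
        = ∑ s : Fin (2 * m) → Option ι, (∏ t, β (s t)) * ∫ U, ∏ t, N (s t) U ∂ρ := by
    intro ρ _
    calc ∫ U, g U ^ (2 * m) ∂ρ
        = ∫ U, ∑ s : Fin (2 * m) → Option ι, (∏ t, β (s t)) * ∏ t, N (s t) U ∂ρ :=
          integral_congr_ae (ae_of_all _ hpow)
      _ = ∑ s : Fin (2 * m) → Option ι, ∫ U, (∏ t, β (s t)) * ∏ t, N (s t) U ∂ρ :=
          integral_finset_sum _ (fun s _ => ((hNint ρ s).const_mul _))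
      _ = ∑ s : Fin (2 * m) → Option ι, (∏ t, β (s t)) * ∫ U, ∏ t, N (s t) U ∂ρ := by
          simp_rw [integral_const_mul]
  have hdeg : ∀ s : Fin (2 * m) → Option ι, (∑ t, d (s t)) ≤ k := by
    intro s
    calc ∑ t, d (s t) ≤ ∑ _t : Fin (2 * m), K :=
          Finset.sum_le_sum fun t _ => by rcases s t with _ | i <;> simp [hd]
      _ = 2 * m * K := by simp [Finset.sum_const, Finset.card_univ]
      _ ≤ k := hmk
  have hdesign' : ∀ s : Fin (2 * m) → Option ι,
      |(∫ U, ∏ t, N (s t) U ∂ν) - ∫ U, ∏ t, N (s t) U ∂μ| ≤ ε / (D : ℝ) ^ k :=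
    fun s => hdesign _ (hdeg s) _ (hNbm s)
  have hβsum : ∑ j : Option ι, |β j| = A + |c| := by
    rw [Fintype.sum_option]
    simp only [hβ, Option.elim, abs_neg]
    rw [← hA]
    ring
  have hνmom : ∫ U, g U ^ (2 * m) ∂ν
      ≤ ∫ U, g U ^ (2 * m) ∂μ + (ε / (D : ℝ) ^ k) * (A + |c|) ^ (2 * m) := by
    have hdiff : (∫ U, g U ^ (2 * m) ∂ν) - ∫ U, g U ^ (2 * m) ∂μ
        = ∑ s : Fin (2 * m) → Option ι,
            (∏ t, β (s t)) * ((∫ U, ∏ t, N (s t) U ∂ν) - ∫ U, ∏ t, N (s t) U ∂μ) := by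
      rw [hsplit ν, hsplit μ, ← Finset.sum_sub_distrib]
      exact Finset.sum_congr rfl fun s _ => by ring
    have habs : |(∫ U, g U ^ (2 * m) ∂ν) - ∫ U, g U ^ (2 * m) ∂μ|
        ≤ (ε / (D : ℝ) ^ k) * (A + |c|) ^ (2 * m) := by
      rw [hdiff]
      refine (Finset.abs_sum_le_sum_abs _ _).trans ?_
      have step : ∀ s : Fin (2 * m) → Option ι,
          |(∏ t, β (s t)) * ((∫ U, ∏ t, N (s t) U ∂ν) - ∫ U, ∏ t, N (s t) U ∂μ)|
            ≤ (∏ t, |β (s t)|) * (ε / (D : ℝ) ^ k) := by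
        intro s
        rw [abs_mul, Finset.abs_prod]
        exact mul_le_mul_of_nonneg_left (hdesign' s)
          (Finset.prod_nonneg fun t _ => abs_nonneg _)
      refine (Finset.sum_le_sum fun s _ => step s).trans ?_
      rw [← Finset.sum_mul]
      have hsum2 : ∑ s : Fin (2 * m) → Option ι, ∏ t, |β (s t)| = (A + |c|) ^ (2 * m) := by
        have h := Finset.sum_pow' Finset.univ (fun j => |β j|) (2 * m)
        rw [Fintype.piFinset_univ] at h
        rw [← h, hβsum]
      rw [hsum2, mul_comm]
    linarith [abs_le.mp habs]
  -- the Haar moment bound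
  have hμmom : ∫ U, g U ^ (2 * m) ∂μ ≤ C * ((m : ℝ) / a) ^ m :=
    moment_bound μ g hgm (A + |c|) hgb C a hC ha (fun δ' hδ' => htail δ' hδ') m hm
  -- Markov / Chebyshev step
  have hδp : 0 < δ ^ (2 * m) := pow_pos hδ _
  have hS : {U : Matrix.specialOrthogonalGroup (Fin D) ℝ | δ ≤ |f U - c|}
      = {U : Matrix.specialOrthogonalGroup (Fin D) ℝ |
          ENNReal.ofReal (δ ^ (2 * m)) ≤ ENNReal.ofReal (g U ^ (2 * m))} := by
    ext U
    simp only [Set.mem_setOf_eq]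
    have hgabs : g U ^ (2 * m) = |g U| ^ (2 * m) := by
      rw [← abs_pow, abs_of_nonneg ((even_two_mul m).pow_nonneg (g U))]
    rw [ENNReal.ofReal_le_ofReal_iff ((even_two_mul m).pow_nonneg (g U)), hgabs]
    rw [pow_le_pow_iff_left₀ hδ.le (abs_nonneg _) (by positivity)]
  have hmar := mul_meas_ge_le_lintegral₀ (μ := ν)
    (f := fun U => ENNReal.ofReal (g U ^ (2 * m)))
    ((hgm.pow_const _).ennreal_ofReal.aemeasurable) (ENNReal.ofReal (δ ^ (2 * m)))
  rw [← MeasureTheory.ofReal_integral_eq_lintegral_ofReal (hgint ν)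
    (ae_of_all _ fun x => (even_two_mul m).pow_nonneg _)] at hmar
  have hmar2 : ν {U : Matrix.specialOrthogonalGroup (Fin D) ℝ |
        ENNReal.ofReal (δ ^ (2 * m)) ≤ ENNReal.ofReal (g U ^ (2 * m))}
      ≤ (ENNReal.ofReal (δ ^ (2 * m)))⁻¹ * ENNReal.ofReal (∫ U, g U ^ (2 * m) ∂ν) := by
    have h := mul_le_mul_right hmar (ENNReal.ofReal (δ ^ (2 * m)))⁻¹
    rwa [← mul_assoc, ENNReal.inv_mul_cancel (ENNReal.ofReal_pos.mpr hδp).ne'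
      ENNReal.ofReal_ne_top, one_mul] at h
  calc ν {U : Matrix.specialOrthogonalGroup (Fin D) ℝ | δ ≤ |f U - c|}
      ≤ (ENNReal.ofReal (δ ^ (2 * m)))⁻¹ * ENNReal.ofReal (∫ U, g U ^ (2 * m) ∂ν) := by
        rw [hS]; exact hmar2
    _ ≤ ENNReal.ofReal ((1 / δ ^ (2 * m)) *
          (C * ((m : ℝ) / a) ^ m + (ε / (D : ℝ) ^ k) * (A + |c|) ^ (2 * m))) := by
        rw [← ENNReal.ofReal_inv_of_pos hδp, ← ENNReal.ofReal_mul (by positivity)]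
        apply ENNReal.ofReal_le_ofReal
        rw [one_div]
        refine mul_le_mul_of_nonneg_left ?_ (inv_nonneg.mpr hδp.le)
        exact hνmom.trans (add_le_add_left hμmom _)
end

section
/- Let D ≥ 3, let e₀ be a fixed standard basis vector of ℝ^D, let μ be the Haar probability measure on SO(D), and fix a unit vector φ ∈ ℝ^D. Then for every Δ ∈ (0,1), Pr_{U∼μ}[ ⟨Ue₀, φ⟩² ≥ (2−Δ)Δ ] ≤ 2·e^{29/64}·exp(−DΔ⁴/32). Equivalently, since the trace distance between the pure states Ue₀ and φ equals √(1 − ⟨Ue₀, φ⟩²), the probability that this trace distance is at most 1−Δ obeys the same bound. -/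
/-!
Haar-random states from `SO(D)` are far from any fixed pure state: for `D ≥ 3`, a fixed
standard basis vector `e₀`, the Haar probability measure `μ` on `SO(D)`, a fixed unit vector
`φ ∈ ℝ^D` and any `Δ ∈ (0,1)`,
`Pr_{U∼μ}[ ⟨Ue₀, φ⟩² ≥ (2−Δ)Δ ] ≤ 2 e^{29/64} exp(−DΔ⁴/32)`.
(Equivalently, since the trace distance between the pure states `Ue₀` and `φ` equals
`√(1 − ⟨Ue₀,φ⟩²)`, the probability that this trace distance is at most `1−Δ` obeys the
same bound.)
-/

open MeasureTheory Matrix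
open scoped ENNReal

section Aux

variable {D : ℕ}

/-- Geometric key inequality for the covering argument. -/
theorem FFS.key_ball (ε : ℝ) (hε0 : 0 < ε) (hε : ε ≤ 1/2) (y v : EuclideanSpace ℝ (Fin D))
    (hy : ‖y‖ ≤ 1) (hv : ‖v‖ = 1) (hin : ε * ‖y‖ ≤ inner ℝ y v) :
    ‖y - ε • v‖ ≤ Real.sqrt (1 - ε ^ 2) := by
  rw [← Real.sqrt_sq (norm_nonneg (y - ε • v))]
  apply Real.sqrt_le_sqrt
  have hexp : ‖y - ε • v‖ ^ 2 = ‖y‖^2 - 2 * (ε * inner ℝ y v) + ε^2 * ‖v‖^2 := by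
    rw [norm_sub_sq_real, real_inner_smul_right, norm_smul]
    simp [abs_of_pos hε0]; ring
  rw [hexp, hv]
  have h1 : 0 ≤ (1-‖y‖)*(1+‖y‖-2*ε^2) :=
    mul_nonneg (by linarith) (by nlinarith [norm_nonneg y])
  nlinarith [h1, mul_le_mul_of_nonneg_left hin (le_of_lt hε0)]

/-- A maximal packing of nearly-orthogonal unit vectors exists. -/
theorem FFS.packing_exists (hD : 1 ≤ D) (ε : ℝ) (hε0 : 0 < ε) (hε : ε ≤ 1/2) :
    ∃ S : Set (EuclideanSpace ℝ (Fin D)), S.Finite ∧ S.Nonempty ∧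
      (∀ v ∈ S, ‖v‖ = 1) ∧
      (∀ u ∈ S, ∀ v ∈ S, u ≠ v → |(inner ℝ u v : ℝ)| ≤ ε) ∧
      (∀ x : EuclideanSpace ℝ (Fin D), ‖x‖ = 1 → ∃ v ∈ S, ε ≤ |(inner ℝ x v : ℝ)|) := by
  classical
  set E := EuclideanSpace ℝ (Fin D)
  set 𝒮 : Set (Set E) := {s | (∀ v ∈ s, ‖v‖ = 1) ∧
    s.Pairwise (fun u v => |(inner ℝ u v : ℝ)| ≤ ε)} with h𝒮
  obtain ⟨S, hSmax⟩ : ∃ S, Maximal (· ∈ 𝒮) S := by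
    apply zorn_subset
    intro c hc hchain
    refine ⟨⋃₀ c, ⟨?_, ?_⟩, fun s hs => Set.subset_sUnion_of_mem hs⟩
    · rintro v ⟨s, hs, hvs⟩
      exact (hc hs).1 v hvs
    · intro u hu v hv huv
      obtain ⟨s, hs, hus⟩ := hu
      obtain ⟨t, ht, hvt⟩ := hv
      rcases hchain.total hs ht with h | h
      · exact (hc ht).2 (h hus) hvt huv
      · exact (hc hs).2 hus (h hvt) huv
  have hSmem := hSmax.1
  have hunit : ∀ v ∈ S, ‖v‖ = 1 := hSmem.1
  have hpair : ∀ u ∈ S, ∀ v ∈ S, u ≠ v → |(inner ℝ u v : ℝ)| ≤ ε :=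
    fun u hu v hv huv => hSmem.2 hu hv huv
  have hcover : ∀ x : E, ‖x‖ = 1 → ∃ v ∈ S, ε ≤ |(inner ℝ x v : ℝ)| := by
    intro x hx
    by_contra hcon
    push_neg at hcon
    have hxS : x ∉ S := by
      intro hxS
      have := hcon x hxS
      rw [real_inner_self_eq_norm_sq, hx] at this
      simp at this; linarith
    have hins : insert x S ∈ 𝒮 := by
      constructor
      · rintro v (rfl | hv)
        · exact hx
        · exact hunit v hv
      · apply Set.Pairwise.insert hSmem.2
        intro v hv hxv
        constructor
        · exact le_of_lt (hcon v hv)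
        · rw [real_inner_comm]; exact le_of_lt (hcon v hv)
    have := hSmax.2 hins (Set.subset_insert x S)
    exact hxS (this (Set.mem_insert x S))
  have hsep : ∀ u ∈ S, ∀ v ∈ S, u ≠ v → 1 ≤ dist u v := by
    intro u hu v hv huv
    have h1 : |(inner ℝ u v : ℝ)| ≤ ε := hpair u hu v hv huv
    have h2 : ‖u - v‖^2 = ‖u‖^2 - 2 * (inner ℝ u v : ℝ) + ‖v‖^2 := norm_sub_sq_real u v
    rw [hunit u hu, hunit v hv] at h2
    rw [dist_eq_norm]
    nlinarith [abs_le.mp h1, norm_nonneg (u - v)]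
  have hfin : S.Finite := by
    obtain ⟨t, hts, htfin, htcov⟩ :=
      finite_cover_balls_of_compact (isCompact_sphere (0:E) 1) (show (0:ℝ) < 1/2 by norm_num)
    have hSsub : S ⊆ Metric.sphere (0:E) 1 := fun v hv => by
      simp [mem_sphere_iff_norm, hunit v hv]
    set F : E → E := fun x =>
      if h : ∃ y ∈ t, x ∈ Metric.ball y (1/2) then h.choose else x with hF
    apply Set.Finite.of_finite_image (f := F)
    · apply htfin.subset
      rintro _ ⟨x, hx, rfl⟩
      have hex : ∃ y ∈ t, x ∈ Metric.ball y (1/2) := by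
        have := htcov (hSsub hx)
        simpa using this
      rw [hF]; simp only [dif_pos hex]
      exact hex.choose_spec.1
    · intro x hx y hy hxy
      by_contra hne
      have hex : ∃ z ∈ t, x ∈ Metric.ball z (1/2) := by simpa using htcov (hSsub hx)
      have hey : ∃ z ∈ t, y ∈ Metric.ball z (1/2) := by simpa using htcov (hSsub hy)
      rw [hF] at hxy
      simp only [dif_pos hex, dif_pos hey] at hxy
      have h1 : dist x hex.choose < 1/2 := by
        have := hex.choose_spec.2; simpa [Metric.mem_ball] using this
      have h2 : dist y hey.choose < 1/2 := by
        have := hey.choose_spec.2; simpa [Metric.mem_ball] using this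
      have : dist x y < 1 := by
        calc dist x y ≤ dist x hex.choose + dist hey.choose y := by
              rw [hxy]; exact dist_triangle _ _ _
        _ < 1 := by rw [dist_comm hey.choose y]; linarith
      exact absurd this (not_lt.mpr (hsep x hx y hy hne))
  have hne : S.Nonempty := by
    have hx : ‖(EuclideanSpace.single (⟨0, by omega⟩ : Fin D) (1:ℝ))‖ = 1 := by
      simp [EuclideanSpace.norm_single]
    obtain ⟨v, hv, _⟩ := hcover _ hx
    exact ⟨v, hv⟩
  exact ⟨S, hfin, hne, hunit, hpair, hcover⟩

/-- Volume bound: a maximal packing has exponentially many elements. -/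
theorem FFS.packing_card (hD : 1 ≤ D) (ε : ℝ) (hε0 : 0 < ε) (hε : ε ≤ 1/2)
    (P : Finset (EuclideanSpace ℝ (Fin D)))
    (hunit : ∀ v ∈ P, ‖v‖ = 1)
    (hcover : ∀ x : EuclideanSpace ℝ (Fin D), ‖x‖ = 1 → ∃ v ∈ P, ε ≤ |(inner ℝ x v : ℝ)|) :
    (1:ℝ) ≤ 2 * P.card * Real.sqrt (1 - ε^2) ^ D := by
  classical
  set r : ℝ := Real.sqrt (1 - ε^2) with hr
  have hr0 : 0 ≤ r := Real.sqrt_nonneg _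
  have hεr : ε ≤ r := by
    have h := Real.sqrt_le_sqrt (show ε^2 ≤ 1-ε^2 by nlinarith)
    rwa [Real.sqrt_sq hε0.le] at h
  have hcov : Metric.closedBall (0:EuclideanSpace ℝ (Fin D)) 1 ⊆
      ⋃ v ∈ P, (Metric.closedBall (ε • v) r ∪ Metric.closedBall (-(ε • v)) r) := by
    intro y hy
    rw [Metric.mem_closedBall, dist_zero_right] at hy
    by_cases hy0 : y = 0
    · obtain ⟨v, hv, _⟩ := hcover (EuclideanSpace.single (⟨0, by omega⟩ : Fin D) (1:ℝ))
        (by simp [EuclideanSpace.norm_single])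
      refine Set.mem_iUnion₂.mpr ⟨v, hv, Or.inl ?_⟩
      rw [Metric.mem_closedBall, hy0, dist_zero_left, norm_smul, hunit v hv]
      simp only [Real.norm_eq_abs, abs_of_pos hε0, mul_one]
      exact hεr
    · have hyn : 0 < ‖y‖ := norm_pos_iff.mpr hy0
      have hxn : ‖(‖y‖⁻¹ • y : EuclideanSpace ℝ (Fin D))‖ = 1 := by
        rw [norm_smul, Real.norm_eq_abs, abs_of_pos (inv_pos.mpr hyn), inv_mul_cancel₀ hyn.ne']
      obtain ⟨v, hv, hvx⟩ := hcover _ hxn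
      have hinner : (inner ℝ (‖y‖⁻¹ • y : EuclideanSpace ℝ (Fin D)) v : ℝ)
          = ‖y‖⁻¹ * inner ℝ y v := real_inner_smul_left _ _ _
      rcases abs_cases (inner ℝ (‖y‖⁻¹ • y : EuclideanSpace ℝ (Fin D)) v : ℝ) with
        ⟨habs, hsign⟩ | ⟨habs, hsign⟩
      · refine Set.mem_iUnion₂.mpr ⟨v, hv, Or.inl ?_⟩
        rw [Metric.mem_closedBall, dist_eq_norm]
        apply FFS.key_ball ε hε0 hε y v hy (hunit v hv)
        rw [habs, hinner] at hvx
        calc ε * ‖y‖ ≤ (‖y‖⁻¹ * inner ℝ y v) * ‖y‖ := mul_le_mul_of_nonneg_right hvx hyn.le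
        _ = inner ℝ y v := by field_simp
      · refine Set.mem_iUnion₂.mpr ⟨v, hv, Or.inr ?_⟩
        rw [Metric.mem_closedBall, dist_eq_norm, show y - -(ε • v) = y - ε • (-v) by
          rw [smul_neg]]
        apply FFS.key_ball ε hε0 hε y (-v) hy (by rw [norm_neg]; exact hunit v hv)
        rw [habs, hinner] at hvx
        rw [inner_neg_right]
        calc ε * ‖y‖ ≤ (-(‖y‖⁻¹ * inner ℝ y v)) * ‖y‖ := mul_le_mul_of_nonneg_right hvx hyn.le
        _ = -(inner ℝ y v) := by field_simp
  have hc0 : volume (Metric.closedBall (0:EuclideanSpace ℝ (Fin D)) 1) ≠ 0 :=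
    (Metric.measure_closedBall_pos _ _ one_pos).ne'
  have hcT : volume (Metric.closedBall (0:EuclideanSpace ℝ (Fin D)) 1) ≠ ⊤ :=
    measure_closedBall_lt_top.ne
  set c := volume (Metric.closedBall (0:EuclideanSpace ℝ (Fin D)) 1) with hcdef
  have hball : ∀ z : EuclideanSpace ℝ (Fin D),
      volume (Metric.closedBall z r) = ENNReal.ofReal (r ^ D) * c := by
    intro z
    rw [Measure.addHaar_closedBall' _ _ hr0]
    simp [finrank_euclideanSpace_fin, hcdef]
  have hmeas : c ≤ (P.card : ℝ≥0∞) * (2 * ENNReal.ofReal (r ^ D) * c) := by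
    calc c ≤ volume (⋃ v ∈ P, (Metric.closedBall (ε • v) r ∪ Metric.closedBall (-(ε • v)) r)) :=
          measure_mono hcov
    _ ≤ ∑ v ∈ P, volume (Metric.closedBall (ε • v) r ∪ Metric.closedBall (-(ε • v)) r) :=
          measure_biUnion_finset_le P _
    _ ≤ ∑ _v ∈ P, 2 * ENNReal.ofReal (r ^ D) * c := by
          apply Finset.sum_le_sum
          intro v _
          calc volume (Metric.closedBall (ε • v) r ∪ Metric.closedBall (-(ε • v)) r)
              ≤ volume (Metric.closedBall (ε • v) r) + volume (Metric.closedBall (-(ε • v)) r) :=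
                measure_union_le _ _
          _ = 2 * ENNReal.ofReal (r ^ D) * c := by rw [hball, hball]; ring
    _ = (P.card : ℝ≥0∞) * (2 * ENNReal.ofReal (r ^ D) * c) := by
          rw [Finset.sum_const, nsmul_eq_mul]
  by_contra hcon
  push_neg at hcon
  have h1 : (P.card : ℝ≥0∞) * (2 * ENNReal.ofReal (r ^ D)) < 1 := by
    have heq : (P.card : ℝ≥0∞) * (2 * ENNReal.ofReal (r ^ D))
        = ENNReal.ofReal (2 * P.card * r ^ D) := by
      rw [ENNReal.ofReal_mul (by positivity : (0:ℝ) ≤ 2 * P.card),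
        ENNReal.ofReal_mul (by norm_num : (0:ℝ) ≤ 2), ENNReal.ofReal_natCast,
        ENNReal.ofReal_ofNat]
      ring
    rw [heq]
    exact ENNReal.ofReal_lt_one.mpr hcon
  have : (P.card : ℝ≥0∞) * (2 * ENNReal.ofReal (r ^ D) * c) < c := by
    calc (P.card : ℝ≥0∞) * (2 * ENNReal.ofReal (r ^ D) * c)
        = ((P.card : ℝ≥0∞) * (2 * ENNReal.ofReal (r ^ D))) * c := by ring
    _ < 1 * c := by
        rw [ENNReal.mul_lt_mul_iff_left hc0 hcT]
        exact h1
    _ = c := one_mul c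
  exact absurd hmeas (not_le.mpr this)

/-- Combinatorial bound: few packing vectors can correlate strongly with a fixed unit vector. -/
theorem FFS.card_bound (ε s : ℝ) (hε0 : 0 ≤ ε) (hs0 : 0 < s)
    (x : EuclideanSpace ℝ (Fin D)) (hx : ‖x‖ = 1)
    (Q : Finset (EuclideanSpace ℝ (Fin D)))
    (hunit : ∀ v ∈ Q, ‖v‖ = 1)
    (hpair : ∀ u ∈ Q, ∀ v ∈ Q, u ≠ v → |(inner ℝ u v : ℝ)| ≤ ε)
    (hbig : ∀ v ∈ Q, s ≤ (inner ℝ x v : ℝ) ^ 2) :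
    (Q.card : ℝ) * (s - ε) ≤ 1 := by
  classical
  rcases Finset.eq_empty_or_nonempty Q with rfl | hQne
  · simp
  set k : ℕ := Q.card with hk
  have hk1 : 1 ≤ (k:ℝ) := by
    have := Finset.card_pos.mpr hQne
    exact_mod_cast this
  set σ : EuclideanSpace ℝ (Fin D) → ℝ := fun v => if (inner ℝ x v : ℝ) < 0 then -1 else 1 with hσ
  have hσabs : ∀ v, σ v * (inner ℝ x v : ℝ) = |(inner ℝ x v : ℝ)| := by
    intro v
    rcases lt_or_ge (inner ℝ x v : ℝ) 0 with h | h
    · rw [hσ]; simp only [if_pos h]; rw [abs_of_neg h]; ring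
    · rw [hσ]; simp only [if_neg (not_lt.mpr h)]; rw [abs_of_nonneg h]; ring
  have hσsq : ∀ v, σ v * σ v = 1 := by
    intro v
    rcases lt_or_ge (inner ℝ x v : ℝ) 0 with h | h
    · rw [hσ]; simp only [if_pos h]; norm_num
    · rw [hσ]; simp only [if_neg (not_lt.mpr h)]; norm_num
  have hσabs1 : ∀ v, |σ v| = 1 := by
    intro v
    rcases lt_or_ge (inner ℝ x v : ℝ) 0 with h | h
    · rw [hσ]; simp only [if_pos h]; norm_num
    · rw [hσ]; simp only [if_neg (not_lt.mpr h)]; norm_num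
  set w : EuclideanSpace ℝ (Fin D) := ∑ v ∈ Q, σ v • v with hw
  have hxw : (inner ℝ x w : ℝ) = ∑ v ∈ Q, |(inner ℝ x v : ℝ)| := by
    rw [hw, inner_sum]
    apply Finset.sum_congr rfl
    intro v hv
    rw [real_inner_smul_right, hσabs]
  have hlow : ∀ v ∈ Q, Real.sqrt s ≤ |(inner ℝ x v : ℝ)| := by
    intro v hv
    rw [show |(inner ℝ x v : ℝ)| = Real.sqrt ((inner ℝ x v : ℝ)^2) by rw [Real.sqrt_sq_eq_abs]]
    exact Real.sqrt_le_sqrt (hbig v hv)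
  have hxw_low : (k:ℝ) * Real.sqrt s ≤ (inner ℝ x w : ℝ) := by
    rw [hxw]
    calc (k:ℝ) * Real.sqrt s = ∑ _v ∈ Q, Real.sqrt s := by
          rw [Finset.sum_const, nsmul_eq_mul]
    _ ≤ ∑ v ∈ Q, |(inner ℝ x v : ℝ)| := Finset.sum_le_sum hlow
  have hww : (inner ℝ w w : ℝ) ≤ (k:ℝ) + (k:ℝ) * ((k:ℝ) - 1) * ε := by
    rw [hw, sum_inner]
    have hterm : ∀ u ∈ Q, (inner ℝ (σ u • u) (∑ v ∈ Q, σ v • v) : ℝ) ≤ 1 + ((k:ℝ)-1) * ε := by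
      intro u hu
      rw [inner_sum]
      rw [← Finset.add_sum_erase _ _ hu]
      have hself : (inner ℝ (σ u • u) (σ u • u) : ℝ) = 1 := by
        rw [real_inner_smul_left, real_inner_smul_right, real_inner_self_eq_norm_sq,
          hunit u hu]
        rw [← mul_assoc, hσsq]; norm_num
      rw [hself]
      have hrest : ∑ v ∈ Q.erase u, (inner ℝ (σ u • u) (σ v • v) : ℝ) ≤ ((k:ℝ)-1) * ε := by
        calc ∑ v ∈ Q.erase u, (inner ℝ (σ u • u) (σ v • v) : ℝ)
            ≤ ∑ v ∈ Q.erase u, ε := by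
              apply Finset.sum_le_sum
              intro v hv
              have hvQ : v ∈ Q := Finset.mem_of_mem_erase hv
              have hvu : v ≠ u := Finset.ne_of_mem_erase hv
              rw [real_inner_smul_left, real_inner_smul_right]
              calc σ u * (σ v * (inner ℝ u v : ℝ)) ≤ |σ u * (σ v * (inner ℝ u v : ℝ))| :=
                    le_abs_self _
              _ = |(inner ℝ u v : ℝ)| := by
                  rw [abs_mul, abs_mul, hσabs1, hσabs1, one_mul, one_mul]
              _ ≤ ε := hpair u hu v hvQ (Ne.symm hvu)
        _ = (Q.erase u).card * ε := by rw [Finset.sum_const, nsmul_eq_mul]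
        _ ≤ ((k:ℝ)-1) * ε := by
              apply mul_le_mul_of_nonneg_right _ hε0
              rw [Finset.card_erase_of_mem hu, ← hk]
              have : (1:ℕ) ≤ k := Finset.card_pos.mpr hQne
              push_cast [Nat.cast_sub this]
              linarith
      linarith
    calc ∑ u ∈ Q, (inner ℝ (σ u • u) (∑ v ∈ Q, σ v • v) : ℝ)
        ≤ ∑ _u ∈ Q, (1 + ((k:ℝ)-1) * ε) := Finset.sum_le_sum hterm
    _ = (k:ℝ) * (1 + ((k:ℝ)-1) * ε) := by rw [Finset.sum_const, nsmul_eq_mul]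
    _ = (k:ℝ) + (k:ℝ) * ((k:ℝ) - 1) * ε := by ring
  have hcs : (inner ℝ x w : ℝ) * (inner ℝ x w : ℝ) ≤ (inner ℝ w w : ℝ) := by
    have := real_inner_mul_inner_self_le x w
    rw [real_inner_self_eq_norm_sq, hx] at this
    rwa [one_pow, one_mul] at this
  have hs_sqrt : Real.sqrt s * Real.sqrt s = s := Real.mul_self_sqrt hs0.le
  have hknn : (0:ℝ) ≤ (k:ℝ) * Real.sqrt s := by positivity
  have hsq2 : ((k:ℝ) * Real.sqrt s) * ((k:ℝ) * Real.sqrt s)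
      ≤ (inner ℝ x w : ℝ) * (inner ℝ x w : ℝ) :=
    mul_le_mul hxw_low hxw_low hknn (le_trans hknn hxw_low)
  have hfin : (k:ℝ)^2 * s ≤ (k:ℝ) + (k:ℝ)*((k:ℝ)-1)*ε := by
    have heq : ((k:ℝ) * Real.sqrt s) * ((k:ℝ) * Real.sqrt s) = (k:ℝ)^2 * s := by
      rw [show ((k:ℝ) * Real.sqrt s) * ((k:ℝ) * Real.sqrt s)
        = (k:ℝ)*(k:ℝ)*(Real.sqrt s * Real.sqrt s) by ring, hs_sqrt]; ring
    rw [← heq]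
    exact le_trans hsq2 (le_trans hcs hww)
  nlinarith [hfin, hk1]

/-- Analytic inequality used in the nontrivial regime. -/
theorem FFS.final_ineq (D : ℕ) (Δ : ℝ) (hΔ0 : 0 < Δ) (hΔ1 : Δ < 1)
    (h36 : 36 < (D:ℝ) * Δ^4) :
    4 * Real.sqrt (1 - ((2-Δ)*Δ/2)^2) ^ D / ((2-Δ)*Δ)
      ≤ 2 * Real.exp (29/64) * Real.exp (-((D:ℝ)*Δ^4)/32) := by
  set s : ℝ := (2-Δ)*Δ with hs
  have hs0 : 0 < s := by nlinarith
  have hsΔ : Δ ≤ s := by nlinarith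
  have hs1 : s ≤ 1 := by nlinarith
  have hε0 : 0 < s/2 := by positivity
  have hr1 : Real.sqrt (1 - (s/2)^2) ≤ Real.exp (-((s/2)^2)/2) := by
    have h1 : (1:ℝ) - (s/2)^2 ≤ Real.exp (-((s/2)^2)) := by
      have := Real.add_one_le_exp (-((s/2)^2))
      linarith
    calc Real.sqrt (1 - (s/2)^2) ≤ Real.sqrt (Real.exp (-((s/2)^2))) := Real.sqrt_le_sqrt h1
    _ = Real.exp (-((s/2)^2)/2) := (Real.exp_half _).symm
  have hrD : Real.sqrt (1 - (s/2)^2) ^ D ≤ Real.exp (-((D:ℝ)*Δ^2)/8) := by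
    calc Real.sqrt (1 - (s/2)^2) ^ D ≤ Real.exp (-((s/2)^2)/2) ^ D :=
          pow_le_pow_left₀ (Real.sqrt_nonneg _) hr1 D
    _ = Real.exp ((D:ℝ) * (-((s/2)^2)/2)) := by rw [← Real.exp_nat_mul]
    _ ≤ Real.exp (-((D:ℝ)*Δ^2)/8) := by
        apply Real.exp_le_exp.mpr
        have : Δ^2 ≤ s^2 := by nlinarith
        have hD0 : (0:ℝ) ≤ (D:ℝ) := Nat.cast_nonneg D
        nlinarith
  have hΔ4 : (0:ℝ) < (D:ℝ) * Δ^2 := by nlinarith [sq_nonneg Δ, pow_pos hΔ0 4, pow_pos hΔ0 2]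
  have hmain : 4 * Real.exp (-((D:ℝ)*Δ^2)/8) / Δ
      ≤ 2 * Real.exp (29/64) * Real.exp (-((D:ℝ)*Δ^4)/32) := by
    rw [div_le_iff₀ hΔ0]
    have hY : 27/(8*Δ^2) ≤ (D:ℝ)*Δ^2/8 - (D:ℝ)*Δ^4/32 := by
      have h1 : 3*((D:ℝ)*Δ^2)/32 ≤ (D:ℝ)*Δ^2/8 - (D:ℝ)*Δ^4/32 := by
        have : (D:ℝ)*Δ^4 ≤ (D:ℝ)*Δ^2 := by
          nlinarith [(Nat.cast_nonneg D : (0:ℝ) ≤ (D:ℝ))]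
        linarith
      have h2 : 27/(8*Δ^2) ≤ 3*((D:ℝ)*Δ^2)/32 := by
        rw [div_le_div_iff₀ (by positivity) (by norm_num)]
        have : 36/Δ^2 < (D:ℝ)*Δ^2 := by
          rw [div_lt_iff₀ (by positivity)]
          calc (36:ℝ) < (D:ℝ)*Δ^4 := h36
          _ = (D:ℝ)*Δ^2*Δ^2 := by ring
        nlinarith [sq_nonneg Δ]
      linarith
    have hexpY : 27/(8*Δ^2) ≤ Real.exp ((D:ℝ)*Δ^2/8 - (D:ℝ)*Δ^4/32) := by
      calc 27/(8*Δ^2) ≤ (D:ℝ)*Δ^2/8 - (D:ℝ)*Δ^4/32 := hY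
      _ ≤ Real.exp ((D:ℝ)*Δ^2/8 - (D:ℝ)*Δ^4/32) := by
          linarith [Real.add_one_le_exp ((D:ℝ)*Δ^2/8 - (D:ℝ)*Δ^4/32)]
    have hsplit : Real.exp (-((D:ℝ)*Δ^4)/32)
        = Real.exp (-((D:ℝ)*Δ^2)/8) * Real.exp ((D:ℝ)*Δ^2/8 - (D:ℝ)*Δ^4/32) := by
      rw [← Real.exp_add]; ring_nf
    rw [hsplit]
    have he29 : (1:ℝ) ≤ Real.exp (29/64) := Real.one_le_exp (by norm_num)
    have hepos : 0 < Real.exp (-((D:ℝ)*Δ^2)/8) := Real.exp_pos _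
    have hkey : 4 * Real.exp (-((D:ℝ)*Δ^2)/8)
        ≤ 2 * (Real.exp (-((D:ℝ)*Δ^2)/8) * Real.exp ((D:ℝ)*Δ^2/8 - (D:ℝ)*Δ^4/32)) * Δ := by
      have h27 : 2 * (27/(8*Δ^2)) * Δ = 27/(4*Δ) := by field_simp; ring
      have hbig : 4 ≤ 2 * Real.exp ((D:ℝ)*Δ^2/8 - (D:ℝ)*Δ^4/32) * Δ := by
        calc (4:ℝ) ≤ 27/(4*Δ) := by
              rw [le_div_iff₀ (by positivity)]; nlinarith
        _ = 2 * (27/(8*Δ^2)) * Δ := h27.symm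
        _ ≤ 2 * Real.exp ((D:ℝ)*Δ^2/8 - (D:ℝ)*Δ^4/32) * Δ := by
              apply mul_le_mul_of_nonneg_right _ hΔ0.le
              apply mul_le_mul_of_nonneg_left hexpY (by norm_num)
      calc 4 * Real.exp (-((D:ℝ)*Δ^2)/8)
          = Real.exp (-((D:ℝ)*Δ^2)/8) * 4 := by ring
      _ ≤ Real.exp (-((D:ℝ)*Δ^2)/8) * (2 * Real.exp ((D:ℝ)*Δ^2/8 - (D:ℝ)*Δ^4/32) * Δ) :=
            mul_le_mul_of_nonneg_left hbig hepos.le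
      _ = 2 * (Real.exp (-((D:ℝ)*Δ^2)/8) * Real.exp ((D:ℝ)*Δ^2/8 - (D:ℝ)*Δ^4/32)) * Δ := by
            ring
    calc 4 * Real.exp (-((D:ℝ)*Δ^2)/8)
        ≤ 2 * (Real.exp (-((D:ℝ)*Δ^2)/8) * Real.exp ((D:ℝ)*Δ^2/8 - (D:ℝ)*Δ^4/32)) * Δ := hkey
    _ ≤ 2 * Real.exp (29/64) * (Real.exp (-((D:ℝ)*Δ^2)/8)
          * Real.exp ((D:ℝ)*Δ^2/8 - (D:ℝ)*Δ^4/32)) * Δ := by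
        apply mul_le_mul_of_nonneg_right _ hΔ0.le
        nlinarith [Real.exp_pos (-((D:ℝ)*Δ^2)/8), Real.exp_pos ((D:ℝ)*Δ^2/8 - (D:ℝ)*Δ^4/32),
          mul_pos (Real.exp_pos (-((D:ℝ)*Δ^2)/8)) (Real.exp_pos ((D:ℝ)*Δ^2/8 - (D:ℝ)*Δ^4/32))]
  calc 4 * Real.sqrt (1 - ((2-Δ)*Δ/2)^2) ^ D / ((2-Δ)*Δ)
      ≤ 4 * Real.exp (-((D:ℝ)*Δ^2)/8) / Δ := by
        apply div_le_div₀ (by positivity) _ hΔ0 hsΔ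
        nlinarith [hrD]
  _ ≤ 2 * Real.exp (29/64) * Real.exp (-((D:ℝ)*Δ^4)/32) := hmain

/-- Transpose preserves membership in the special orthogonal group. -/
theorem FFS.star_mem_SO {W : Matrix (Fin D) (Fin D) ℝ}
    (h : W ∈ Matrix.specialOrthogonalGroup (Fin D) ℝ) :
    star W ∈ Matrix.specialOrthogonalGroup (Fin D) ℝ := by
  rw [mem_specialOrthogonalGroup_iff] at h ⊢
  refine ⟨Unitary.star_mem h.1, ?_⟩
  rw [Matrix.star_eq_conjTranspose, Matrix.det_conjTranspose, star_trivial, h.2]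

/-- `SO(D)` acts transitively: some special orthogonal matrix has `a` as its `i₀` column. -/
theorem FFS.exists_col (hD : 2 ≤ D) (i₀ : Fin D) (a : Fin D → ℝ) (ha : ∑ i, a i ^ 2 = 1) :
    ∃ g : Matrix.specialOrthogonalGroup (Fin D) ℝ, g.1.mulVec (Pi.single i₀ 1) = a := by
  classical
  set E := EuclideanSpace ℝ (Fin D)
  set a' : E := (WithLp.equiv 2 (Fin D → ℝ)).symm a with ha'
  have ha'n : ‖a'‖ = 1 := by
    rw [EuclideanSpace.norm_eq]
    simp only [Real.norm_eq_abs, sq_abs]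
    have : ∀ i, a' i = a i := fun i => rfl
    simp only [this, ha, Real.sqrt_one]
  have card : Module.finrank ℝ E = Fintype.card (Fin D) := by simp [E]
  have horto : Orthonormal ℝ (({i₀} : Set (Fin D)).restrict (fun _ => a')) := by
    constructor
    · intro i; exact ha'n
    · intro i j hij; exact absurd (Subtype.ext (by
        have hi := i.2; have hj := j.2
        simp only [Set.mem_singleton_iff] at hi hj; rw [hi, hj])) hij
  obtain ⟨B, hB⟩ := Orthonormal.exists_orthonormalBasis_extension_of_card_eq card horto
  have hBi₀ : B i₀ = a' := hB i₀ rfl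
  set W₀ : Matrix (Fin D) (Fin D) ℝ := Matrix.of (fun i j => B j i) with hW₀def
  have hW₀entry : ∀ i j, W₀ i j = B j i := fun i j => rfl
  have hW₀orth : star W₀ * W₀ = 1 := by
    ext j k
    rw [Matrix.mul_apply, Matrix.one_apply]
    have : ∀ i, star W₀ j i = B j i := fun i => rfl
    simp only [this, hW₀entry]
    have hB2 := B.orthonormal
    rw [orthonormal_iff_ite] at hB2
    have h2 := hB2 j k
    rw [PiLp.inner_apply] at h2
    simpa [RCLike.inner_apply, conj_trivial, mul_comm] using h2
  have hdet2 : W₀.det * W₀.det = 1 := by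
    have := congrArg Matrix.det hW₀orth
    rwa [Matrix.det_mul, Matrix.det_one, Matrix.star_eq_conjTranspose,
      Matrix.det_conjTranspose, star_trivial] at this
  obtain ⟨j₁, hj₁⟩ : ∃ j : Fin D, j ≠ i₀ := by
    have : Nontrivial (Fin D) := Fin.nontrivial_iff_two_le.mpr hD
    exact exists_ne i₀
  set η : Fin D → ℝ := fun j => if j = j₁ then W₀.det else 1 with hη
  have hηsq : ∀ j, η j * η j = 1 := by
    intro j; by_cases h : j = j₁ <;> simp [hη, h, hdet2]
  set W : Matrix (Fin D) (Fin D) ℝ := W₀ * Matrix.diagonal η with hWdef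
  have hWorth : star W * W = 1 := by
    rw [hWdef, StarMul.star_mul, Matrix.star_eq_conjTranspose, Matrix.diagonal_conjTranspose]
    have hsη : star η = η := by ext j; simp
    rw [hsη, Matrix.mul_assoc, ← Matrix.mul_assoc (star W₀), hW₀orth, Matrix.one_mul,
      Matrix.diagonal_mul_diagonal]
    have : (fun i => η i * η i) = fun _ => (1:ℝ) := funext hηsq
    rw [this]
    exact Matrix.diagonal_one
  have hWdet : W.det = 1 := by
    rw [hWdef, Matrix.det_mul, Matrix.det_diagonal]
    have : ∏ j, η j = W₀.det := by
      rw [hη]; rw [Finset.prod_ite_eq' Finset.univ j₁ (fun _ => W₀.det)]; simp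
    rw [this, hdet2]
  refine ⟨⟨W, ?_⟩, ?_⟩
  · rw [mem_specialOrthogonalGroup_iff, mem_orthogonalGroup_iff']
    exact ⟨hWorth, hWdet⟩
  · ext i
    rw [Matrix.mulVec_single]
    show W i i₀ * 1 = a i
    have : W i i₀ = W₀ i i₀ * η i₀ := by rw [hWdef, Matrix.mul_diagonal]
    rw [mul_one, this, hη]
    simp only [if_neg (Ne.symm hj₁)]
    rw [mul_one, hW₀entry, hBi₀]
    rfl

/-- Map any unit vector to any other by a special orthogonal matrix. -/
theorem FFS.exists_mapsto (hD : 2 ≤ D) (a b : Fin D → ℝ)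
    (ha : ∑ i, a i ^ 2 = 1) (hb : ∑ i, b i ^ 2 = 1) :
    ∃ g : Matrix.specialOrthogonalGroup (Fin D) ℝ, g.1.mulVec a = b := by
  classical
  have i₀ : Fin D := ⟨0, by omega⟩
  obtain ⟨ga, hga⟩ := FFS.exists_col hD i₀ a ha
  obtain ⟨gb, hgb⟩ := FFS.exists_col hD i₀ b hb
  refine ⟨gb * ⟨star ga.1, FFS.star_mem_SO ga.2⟩, ?_⟩
  have hmul : (gb * ⟨star ga.1, FFS.star_mem_SO ga.2⟩).1 = gb.1 * star ga.1 := rfl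
  rw [hmul, ← Matrix.mulVec_mulVec]
  have hstar : (star ga.1).mulVec a = Pi.single i₀ 1 := by
    have h1 : star ga.1 * ga.1 = 1 := by
      have h := ga.2
      rw [mem_specialOrthogonalGroup_iff, mem_orthogonalGroup_iff'] at h
      exact h.1
    calc (star ga.1).mulVec a = (star ga.1).mulVec (ga.1.mulVec (Pi.single i₀ 1)) := by
          rw [hga]
    _ = (star ga.1 * ga.1).mulVec (Pi.single i₀ 1) := by rw [Matrix.mulVec_mulVec]
    _ = Pi.single i₀ 1 := by rw [h1, Matrix.one_mulVec]
  rw [hstar, hgb]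

theorem FFS.meas_entry (i j : Fin D) :
    Measurable (fun U : Matrix.specialOrthogonalGroup (Fin D) ℝ => U.1 i j) := by
  have h1 : Measurable (fun U : Matrix.specialOrthogonalGroup (Fin D) ℝ => U.1) :=
    measurable_subtype_coe
  exact (measurable_pi_apply j).comp ((measurable_pi_apply i).comp h1)

theorem FFS.meas_dot (v : Fin D → ℝ) (i₀ : Fin D) :
    Measurable (fun U : Matrix.specialOrthogonalGroup (Fin D) ℝ =>
      dotProduct (U.1.mulVec (Pi.single i₀ 1)) v) := by
  have h : (fun U : Matrix.specialOrthogonalGroup (Fin D) ℝ =>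
      dotProduct (U.1.mulVec (Pi.single i₀ 1)) v)
      = fun U => ∑ i, U.1 i i₀ * v i := by
    funext U
    simp [dotProduct, Matrix.mulVec_single]
  rw [h]
  exact Finset.measurable_sum _ fun i _ => (FFS.meas_entry i i₀).mul measurable_const

theorem FFS.meas_mul_left (g : Matrix.specialOrthogonalGroup (Fin D) ℝ) :
    Measurable (fun U : Matrix.specialOrthogonalGroup (Fin D) ℝ => g * U) := by
  apply Measurable.subtype_mk
  show Measurable (fun U : Matrix.specialOrthogonalGroup (Fin D) ℝ => g.1 * U.1)
  apply measurable_pi_lambda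
  intro i
  apply measurable_pi_lambda
  intro j
  have h : (fun U : Matrix.specialOrthogonalGroup (Fin D) ℝ => (g.1 * U.1) i j)
      = fun U => ∑ k, g.1 i k * U.1 k j := by
    funext U; rw [Matrix.mul_apply]
  show Measurable (fun U : Matrix.specialOrthogonalGroup (Fin D) ℝ => (g.1 * U.1) i j)
  rw [h]
  exact Finset.measurable_sum _ fun k _ => measurable_const.mul (FFS.meas_entry k j)

end Aux

theorem far_from_fixed_state_SO (D : ℕ) (hD : 3 ≤ D) (i₀ : Fin D)
    (μ : Measure (Matrix.specialOrthogonalGroup (Fin D) ℝ))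
    [IsProbabilityMeasure μ] [μ.IsMulLeftInvariant]
    (φ : Fin D → ℝ) (hφ : (∑ i, φ i ^ 2) = 1)
    (Δ : ℝ) (hΔ0 : 0 < Δ) (hΔ1 : Δ < 1) :
    μ {U | (2 - Δ) * Δ ≤ (dotProduct (U.1.mulVec (Pi.single i₀ 1)) φ) ^ 2}
      ≤ ENNReal.ofReal (2 * Real.exp (29 / 64) * Real.exp (-((D : ℝ) * Δ ^ 4) / 32)) := by
  classical
  set s : ℝ := (2 - Δ) * Δ with hsdef
  have hs0 : 0 < s := by nlinarith
  have hs1 : s ≤ 1 := by nlinarith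
  -- trivial regime
  by_cases hcase : (D:ℝ) * Δ^4 ≤ 36
  · have h1 : (1:ℝ) ≤ 2 * Real.exp (29 / 64) * Real.exp (-((D : ℝ) * Δ ^ 4) / 32) := by
      have he : Real.exp (43/64) < 2 := by
        have hlog : (43:ℝ)/64 < Real.log 2 := by
          have := Real.log_two_gt_d9
          norm_num at this ⊢
          linarith
        calc Real.exp (43/64) < Real.exp (Real.log 2) := Real.exp_lt_exp.mpr hlog
        _ = 2 := Real.exp_log (by norm_num)
      have h2 : Real.exp (-(36:ℝ)/32) ≤ Real.exp (-((D : ℝ) * Δ ^ 4) / 32) := by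
        apply Real.exp_le_exp.mpr
        linarith
      have h3 : (1:ℝ) ≤ 2 * Real.exp (29/64) * Real.exp (-(36:ℝ)/32) := by
        have : 2 * Real.exp (29/64) * Real.exp (-(36:ℝ)/32)
            = 2 * Real.exp (29/64 + -(36:ℝ)/32) := by
          rw [mul_assoc, ← Real.exp_add]
        rw [this, show (29:ℝ)/64 + -(36:ℝ)/32 = -(43/64) by norm_num]
        rw [Real.exp_neg, ← div_eq_mul_inv, le_div_iff₀ (Real.exp_pos _), one_mul]
        exact he.le
      calc (1:ℝ) ≤ 2 * Real.exp (29/64) * Real.exp (-(36:ℝ)/32) := h3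
      _ ≤ 2 * Real.exp (29/64) * Real.exp (-((D : ℝ) * Δ ^ 4) / 32) := by
          apply mul_le_mul_of_nonneg_left h2 (by positivity)
    calc μ {U | (2 - Δ) * Δ ≤ (dotProduct (U.1.mulVec (Pi.single i₀ 1)) φ) ^ 2}
        ≤ 1 := prob_le_one
    _ ≤ ENNReal.ofReal (2 * Real.exp (29 / 64) * Real.exp (-((D : ℝ) * Δ ^ 4) / 32)) :=
        ENNReal.one_le_ofReal.mpr h1
  -- nontrivial regime
  push_neg at hcase
  set ε : ℝ := s / 2 with hεdef
  have hε0 : 0 < ε := by positivity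
  have hε12 : ε ≤ 1/2 := by rw [hεdef]; linarith
  obtain ⟨S, hSfin, hSne, hSunit, hSpair, hScover⟩ :=
    FFS.packing_exists (by omega : 1 ≤ D) ε hε0 hε12
  set P : Finset (EuclideanSpace ℝ (Fin D)) := hSfin.toFinset with hPdef
  have hPmem : ∀ v, v ∈ P ↔ v ∈ S := fun v => Set.Finite.mem_toFinset hSfin
  have hPunit : ∀ v ∈ P, ‖v‖ = 1 := fun v hv => hSunit v ((hPmem v).mp hv)
  have hPpair : ∀ u ∈ P, ∀ v ∈ P, u ≠ v → |(inner ℝ u v : ℝ)| ≤ ε :=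
    fun u hu v hv huv => hSpair u ((hPmem u).mp hu) v ((hPmem v).mp hv) huv
  have hPcover : ∀ x : EuclideanSpace ℝ (Fin D), ‖x‖ = 1 → ∃ v ∈ P, ε ≤ |(inner ℝ x v : ℝ)| := by
    intro x hx
    obtain ⟨v, hv, h⟩ := hScover x hx
    exact ⟨v, (hPmem v).mpr hv, h⟩
  have hPne : P.Nonempty := by
    obtain ⟨v, hv⟩ := hSne
    exact ⟨v, (hPmem v).mpr hv⟩
  have hcard := FFS.packing_card (by omega : 1 ≤ D) ε hε0 hε12 P hPunit hPcover
  set r : ℝ := Real.sqrt (1 - ε^2) with hrdef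
  -- the family of events
  set A : (Fin D → ℝ) → Set (Matrix.specialOrthogonalGroup (Fin D) ℝ) :=
    fun v => {U | s ≤ (dotProduct (U.1.mulVec (Pi.single i₀ 1)) v) ^ 2} with hAdef
  have hAmeas : ∀ v, MeasurableSet (A v) := by
    intro v
    exact measurableSet_le measurable_const ((FFS.meas_dot v i₀).pow_const 2)
  -- invariance: each A v (v unit) has the same measure as A φ
  have hinv : ∀ v : Fin D → ℝ, (∑ i, v i ^ 2) = 1 → μ (A v) = μ (A φ) := by
    intro v hv
    obtain ⟨T, hT⟩ := FFS.exists_mapsto (by omega : 2 ≤ D) φ v hφ hv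
    set g : Matrix.specialOrthogonalGroup (Fin D) ℝ := ⟨star T.1, FFS.star_mem_SO T.2⟩ with hg
    have hpre : A v = (fun U => g * U) ⁻¹' (A φ) := by
      ext U
      simp only [hAdef, Set.mem_setOf_eq, Set.mem_preimage]
      have hgU : (g * U).1 = star T.1 * U.1 := rfl
      have hdot : dotProduct ((g * U).1.mulVec (Pi.single i₀ 1)) φ
          = dotProduct (U.1.mulVec (Pi.single i₀ 1)) v := by
        rw [hgU, ← Matrix.mulVec_mulVec]
        rw [dotProduct_comm, dotProduct_mulVec, dotProduct_comm]
        congr 1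
        rw [← hT]
        rw [show Matrix.vecMul φ (star T.1) = (star T.1)ᵀ.mulVec φ from
          (Matrix.mulVec_transpose _ _).symm]
        congr 1
      rw [hdot]
    rw [hpre, ← Measure.map_apply (FFS.meas_mul_left g) (hAmeas φ),
      MeasureTheory.map_mul_left_eq_self μ g]
  -- each packing vector gives an event of equal probability
  have hPinv : ∀ v ∈ P, μ (A (WithLp.equiv 2 (Fin D → ℝ) v)) = μ (A φ) := by
    intro v hv
    apply hinv
    have h1 : ‖v‖ = 1 := hPunit v hv
    rw [EuclideanSpace.norm_eq] at h1
    have h2 : ∑ i, ((WithLp.equiv 2 (Fin D → ℝ)) v) i ^ 2 = ∑ i, ‖v i‖ ^ 2 := by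
      apply Finset.sum_congr rfl
      intro i _
      rw [Real.norm_eq_abs, sq_abs]
      rfl
    rw [h2]
    exact Real.sqrt_eq_one.mp h1
  -- pointwise count bound
  have hcount : ∀ U : Matrix.specialOrthogonalGroup (Fin D) ℝ,
      ((P.filter (fun v => U ∈ A (WithLp.equiv 2 (Fin D → ℝ) v))).card : ℝ) ≤ 2 / s := by
    intro U
    set x : EuclideanSpace ℝ (Fin D) :=
      (WithLp.equiv 2 (Fin D → ℝ)).symm (U.1.mulVec (Pi.single i₀ 1)) with hx
    have hxunit : ‖x‖ = 1 := by
      rw [EuclideanSpace.norm_eq]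
      have hsum : ∑ i, ‖x i‖ ^ 2 = ∑ i, (U.1 i i₀) ^ 2 := by
        apply Finset.sum_congr rfl
        intro i _
        rw [Real.norm_eq_abs, sq_abs]
        show (U.1.mulVec (Pi.single i₀ 1) i) ^ 2 = _
        simp [Matrix.mulVec_single]
      rw [hsum]
      have horth : star U.1 * U.1 = 1 := by
        have h := U.2
        rw [mem_specialOrthogonalGroup_iff, mem_orthogonalGroup_iff'] at h
        exact h.1
      have hentry := congrFun (congrFun horth i₀) i₀
      rw [Matrix.mul_apply, Matrix.one_apply_eq] at hentry
      have hsum2 : ∑ k, (U.1 k i₀)^2 = 1 := by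
        rw [← hentry]
        apply Finset.sum_congr rfl
        intro k _
        rw [Matrix.star_apply, star_trivial]
        ring
      rw [hsum2, Real.sqrt_one]
    set Q := P.filter (fun v => U ∈ A (WithLp.equiv 2 (Fin D → ℝ) v)) with hQ
    have hQunit : ∀ v ∈ Q, ‖v‖ = 1 := fun v hv => hPunit v (Finset.mem_of_mem_filter v hv)
    have hQpair : ∀ u ∈ Q, ∀ v ∈ Q, u ≠ v → |(inner ℝ u v : ℝ)| ≤ ε :=
      fun u hu v hv huv =>
        hPpair u (Finset.mem_of_mem_filter u hu) v (Finset.mem_of_mem_filter v hv) huv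
    have hQbig : ∀ v ∈ Q, s ≤ (inner ℝ x v : ℝ) ^ 2 := by
      intro v hv
      have hmem := (Finset.mem_filter.mp hv).2
      simp only [hAdef, Set.mem_setOf_eq] at hmem
      have hid : (inner ℝ x v : ℝ)
          = dotProduct (U.1.mulVec (Pi.single i₀ 1)) (WithLp.equiv 2 (Fin D → ℝ) v) := by
        rw [PiLp.inner_apply]
        simp only [RCLike.inner_apply, conj_trivial]
        exact Finset.sum_congr rfl fun i _ => mul_comm _ _
      rw [hid]
      exact hmem
    have := FFS.card_bound ε s hε0.le hs0 x hxunit Q hQunit hQpair hQbig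
    have hsε : s - ε = s / 2 := by rw [hεdef]; ring
    rw [hsε] at this
    rw [le_div_iff₀ hs0]
    nlinarith [this]
  -- sum of measures bound
  have hsum : (P.card : ℝ≥0∞) * μ (A φ) ≤ ENNReal.ofReal (2 / s) := by
    have h1 : (P.card : ℝ≥0∞) * μ (A φ)
        = ∑ v ∈ P, μ (A (WithLp.equiv 2 (Fin D → ℝ) v)) := by
      rw [Finset.sum_congr rfl (fun v hv => hPinv v hv), Finset.sum_const, nsmul_eq_mul]
    rw [h1]
    have h2 : ∀ v ∈ P, μ (A (WithLp.equiv 2 (Fin D → ℝ) v))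
        = ∫⁻ U, (A (WithLp.equiv 2 (Fin D → ℝ) v)).indicator (fun _ => 1) U ∂μ := by
      intro v _
      rw [lintegral_indicator_const (hAmeas _), one_mul]
    rw [Finset.sum_congr rfl h2, ← lintegral_finset_sum _ (fun v _ =>
      (measurable_const.indicator (hAmeas _)))]
    calc ∫⁻ U, (∑ v ∈ P,
            (A (WithLp.equiv 2 (Fin D → ℝ) v)).indicator (fun _ => (1:ℝ≥0∞)) U) ∂μ
        ≤ ∫⁻ _U, ENNReal.ofReal (2 / s) ∂μ := by
          apply lintegral_mono
          intro U
          show (∑ v ∈ P, (A (WithLp.equiv 2 (Fin D → ℝ) v)).indicator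
            (fun _ => (1:ℝ≥0∞)) U) ≤ ENNReal.ofReal (2 / s)
          have heq : ∑ v ∈ P,
              (A (WithLp.equiv 2 (Fin D → ℝ) v)).indicator (fun _ => (1:ℝ≥0∞)) U
              = ((P.filter (fun v => U ∈ A (WithLp.equiv 2 (Fin D → ℝ) v))).card : ℝ≥0∞) := by
            rw [Finset.card_filter]
            push_cast
            apply Finset.sum_congr rfl
            intro v _
            simp [Set.indicator_apply]
          rw [heq]
          calc ((P.filter (fun v => U ∈ A (WithLp.equiv 2 (Fin D → ℝ) v))).card : ℝ≥0∞)
              = ENNReal.ofReal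
                  ((P.filter (fun v => U ∈ A (WithLp.equiv 2 (Fin D → ℝ) v))).card : ℝ) := by
                rw [ENNReal.ofReal_natCast]
          _ ≤ ENNReal.ofReal (2 / s) := ENNReal.ofReal_le_ofReal (hcount U)
    _ = ENNReal.ofReal (2 / s) := by rw [lintegral_const, measure_univ, mul_one]
  -- conclude
  have hPcard0 : (P.card : ℝ≥0∞) ≠ 0 := by
    simp only [ne_eq, Nat.cast_eq_zero]
    exact Finset.card_ne_zero_of_mem hPne.choose_spec
  have hPcardT : (P.card : ℝ≥0∞) ≠ ⊤ := ENNReal.natCast_ne_top _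
  have hstep : μ (A φ) ≤ ENNReal.ofReal (4 * r ^ D / s) := by
    rw [← ENNReal.mul_le_mul_iff_right hPcard0 hPcardT]
    calc (P.card : ℝ≥0∞) * μ (A φ) ≤ ENNReal.ofReal (2 / s) := hsum
    _ ≤ ENNReal.ofReal ((P.card : ℝ) * (4 * r ^ D / s)) := by
        apply ENNReal.ofReal_le_ofReal
        have hr0 : (0:ℝ) ≤ r := Real.sqrt_nonneg _
        have : (P.card : ℝ) * (4 * r ^ D / s) = (2/s) * (2 * P.card * r ^ D) := by
          field_simp
          ring
        rw [this]
        nlinarith [hcard, div_pos (by norm_num : (0:ℝ) < 2) hs0]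
    _ = (P.card : ℝ≥0∞) * ENNReal.ofReal (4 * r ^ D / s) := by
        rw [ENNReal.ofReal_mul (by positivity), ENNReal.ofReal_natCast]
  have hfinal : 4 * r ^ D / s
      ≤ 2 * Real.exp (29 / 64) * Real.exp (-((D : ℝ) * Δ ^ 4) / 32) := by
    have := FFS.final_ineq D Δ hΔ0 hΔ1 hcase
    rw [hrdef, hεdef, hsdef]
    exact this
  calc μ (A φ) ≤ ENNReal.ofReal (4 * r ^ D / s) := hstep
  _ ≤ ENNReal.ofReal (2 * Real.exp (29 / 64) * Real.exp (-((D : ℝ) * Δ ^ 4) / 32)) :=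
      ENNReal.ofReal_le_ofReal hfinal
end

section
/- Let D ≥ 3 and Δ ∈ (0,1), and let N be a natural number with N ≤ (1/4)·e^{−29/64}·exp(DΔ⁴/32). Then there exist N unit vectors ψ₁, …, ψ_N ∈ ℝ^D such that for all i ≠ j, √(1 − ⟨ψᵢ, ψⱼ⟩²) ≥ 1 − Δ; that is, the pairwise trace distance between the corresponding pure states is at least 1 − Δ. -/
/-!
Packing of nearly orthogonal real pure states: for `D ≥ 3`, `Δ ∈ (0,1)` and any
`N ≤ (1/4) e^{−29/64} exp(DΔ⁴/32)`, there exist `N` unit vectors `ψ₁, …, ψ_N ∈ ℝ^D`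
whose pairwise trace distance `√(1 − ⟨ψᵢ, ψⱼ⟩²)` is at least `1 − Δ`.
-/

open Finset

namespace PackingRealStatesAux

/-- Sign vector associated to a boolean vector. -/
noncomputable def sgn (D : ℕ) (v : Fin D → Bool) : Fin D → ℝ :=
  fun i => if v i then 1 else -1

lemma sgn_sq (D : ℕ) (v : Fin D → Bool) (i : Fin D) : sgn D v i ^ 2 = 1 := by
  unfold sgn; split <;> norm_num

lemma sgn_pm (D : ℕ) (v : Fin D → Bool) (i : Fin D) :
    sgn D v i = 1 ∨ sgn D v i = -1 := by
  unfold sgn; split <;> simp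

/-- MGF identity for sums of signs. -/
lemma mgf (D : ℕ) (w : Fin D → ℝ) (hw : ∀ i, w i = 1 ∨ w i = -1) (s : ℝ) :
    ∑ v : Fin D → Bool, Real.exp (s * ∑ i, w i * sgn D v i)
      = (Real.exp s + Real.exp (-s)) ^ D := by
  have key : ((Real.exp s + Real.exp (-s)) ^ D : ℝ)
      = ∏ i : Fin D, ∑ b ∈ (Finset.univ : Finset Bool),
          Real.exp (s * (w i * (if b then (1:ℝ) else -1))) := by
    rw [Finset.prod_congr rfl fun i _ => ?_, Finset.prod_const, Finset.card_univ,
      Fintype.card_fin]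
    rcases hw i with h | h <;> simp [h, Fintype.sum_bool] <;> ring_nf
  rw [key, Finset.prod_univ_sum, Fintype.piFinset_univ]
  refine Finset.sum_congr rfl fun v _ => ?_
  rw [Finset.mul_sum, Real.exp_sum]
  exact Finset.prod_congr rfl fun i _ => rfl

/-- One-sided Hoeffding/Chernoff tail bound. -/
lemma tail (D : ℕ) (w : Fin D → ℝ) (hw : ∀ i, w i = 1 ∨ w i = -1)
    (s : ℝ) (hs : 0 ≤ s) :
    ((Finset.univ.filter
        (fun v : Fin D → Bool => s * D ≤ ∑ i, w i * sgn D v i)).card : ℝ)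
      ≤ 2 ^ D * Real.exp (-(s ^ 2 * D / 2)) := by
  set T := Finset.univ.filter
      (fun v : Fin D → Bool => s * D ≤ ∑ i, w i * sgn D v i) with hT
  have h1 : (T.card : ℝ) * Real.exp (s * (s * D))
      ≤ ∑ v ∈ T, Real.exp (s * ∑ i, w i * sgn D v i) := by
    have := Finset.card_nsmul_le_sum T
      (fun v => Real.exp (s * ∑ i, w i * sgn D v i))
      (Real.exp (s * (s * D))) ?_
    · simpa [nsmul_eq_mul] using this
    · intro v hv
      rw [hT, Finset.mem_filter] at hv
      exact Real.exp_le_exp.2 (by nlinarith [hv.2])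
  have h2 : ∑ v ∈ T, Real.exp (s * ∑ i, w i * sgn D v i)
      ≤ ∑ v : Fin D → Bool, Real.exp (s * ∑ i, w i * sgn D v i) :=
    Finset.sum_le_sum_of_subset_of_nonneg (Finset.filter_subset _ _)
      (fun v _ _ => (Real.exp_pos _).le)
  have h3 : (∑ v : Fin D → Bool, Real.exp (s * ∑ i, w i * sgn D v i))
      ≤ 2 ^ D * Real.exp (s ^ 2 * D / 2) := by
    rw [mgf D w hw s]
    have hcosh : Real.exp s + Real.exp (-s) ≤ 2 * Real.exp (s ^ 2 / 2) := by
      have := Real.cosh_le_exp_half_sq s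
      rw [Real.cosh_eq] at this
      linarith
    calc (Real.exp s + Real.exp (-s)) ^ D
        ≤ (2 * Real.exp (s ^ 2 / 2)) ^ D := by
          apply pow_le_pow_left₀ (by positivity) hcosh
      _ = 2 ^ D * Real.exp (s ^ 2 * D / 2) := by
          rw [mul_pow, ← Real.exp_nat_mul]; ring_nf
  have h4 : (T.card : ℝ) * Real.exp (s * (s * D))
      ≤ 2 ^ D * Real.exp (s ^ 2 * D / 2) := le_trans h1 (le_trans h2 h3)
  have hE : (0:ℝ) < Real.exp (s * (s * D)) := Real.exp_pos _
  rw [← le_div_iff₀ hE] at h4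
  calc (T.card : ℝ) ≤ 2 ^ D * Real.exp (s ^ 2 * D / 2) / Real.exp (s * (s * D)) := h4
    _ = 2 ^ D * Real.exp (s ^ 2 * D / 2 - s * (s * D)) := by
        rw [Real.exp_sub]; ring
    _ = 2 ^ D * Real.exp (-(s ^ 2 * D / 2)) := by ring_nf

/-- The "bad" set of boolean vectors too correlated with a given one. -/
noncomputable def bad (D : ℕ) (t : ℝ) (u : Fin D → Bool) : Finset (Fin D → Bool) :=
  Finset.univ.filter (fun v => t * D < |∑ k, sgn D u k * sgn D v k|)

lemma bad_card (D : ℕ) (t : ℝ) (ht : 0 ≤ t) (u : Fin D → Bool) :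
    ((bad D t u).card : ℝ) ≤ 2 ^ (D + 1) * Real.exp (-(t ^ 2 * D / 2)) := by
  set P := Finset.univ.filter
      (fun v : Fin D → Bool => t * D ≤ ∑ k, sgn D u k * sgn D v k)
  set Q := Finset.univ.filter
      (fun v : Fin D → Bool => t * D ≤ ∑ k, (-sgn D u k) * sgn D v k)
  have hsub : bad D t u ⊆ P ∪ Q := by
    intro v hv
    rw [bad, Finset.mem_filter] at hv
    rcases abs_cases (∑ k, sgn D u k * sgn D v k) with ⟨habs, _⟩ | ⟨habs, _⟩
    · refine Finset.mem_union_left _ ?_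
      simp only [P, Finset.mem_filter, Finset.mem_univ, true_and]
      linarith [hv.2, habs.le]
    · refine Finset.mem_union_right _ ?_
      simp only [Q, Finset.mem_filter, Finset.mem_univ, true_and]
      have : ∑ k, (-sgn D u k) * sgn D v k = -∑ k, sgn D u k * sgn D v k := by
        rw [← Finset.sum_neg_distrib]
        exact Finset.sum_congr rfl fun k _ => by ring
      rw [this]
      linarith [hv.2]
  have hP : ((P.card : ℝ)) ≤ 2 ^ D * Real.exp (-(t ^ 2 * D / 2)) :=
    tail D (sgn D u) (fun i => sgn_pm D u i) t ht
  have hQ : ((Q.card : ℝ)) ≤ 2 ^ D * Real.exp (-(t ^ 2 * D / 2)) := by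
    refine tail D (fun k => -sgn D u k) (fun i => ?_) t ht
    rcases sgn_pm D u i with h | h <;> simp [h]
  have hcard : (bad D t u).card ≤ P.card + Q.card :=
    le_trans (Finset.card_le_card hsub) (Finset.card_union_le _ _)
  calc ((bad D t u).card : ℝ) ≤ (P.card : ℝ) + (Q.card : ℝ) := by exact_mod_cast hcard
    _ ≤ 2 ^ D * Real.exp (-(t ^ 2 * D / 2)) + 2 ^ D * Real.exp (-(t ^ 2 * D / 2)) :=
        add_le_add hP hQ
    _ = 2 ^ (D + 1) * Real.exp (-(t ^ 2 * D / 2)) := by rw [pow_succ]; ring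

/-- Greedy packing of boolean sign vectors with small pairwise correlations. -/
lemma greedy (D : ℕ) (t : ℝ) (ht : 0 ≤ t) :
    ∀ n : ℕ, ((n : ℝ) ≤ 1 / 2 * Real.exp (t ^ 2 * D / 2)) →
      ∃ f : Fin n → (Fin D → Bool), ∀ i j, i ≠ j →
        |∑ k, sgn D (f i) k * sgn D (f j) k| ≤ t * D := by
  intro n
  induction n with
  | zero => exact fun _ => ⟨finZeroElim, fun i _ _ => i.elim0⟩
  | succ n ih =>
    intro h
    have hn : (n : ℝ) ≤ 1 / 2 * Real.exp (t ^ 2 * D / 2) := by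
      have : (n : ℝ) ≤ (n + 1 : ℕ) := by exact_mod_cast Nat.le_succ n
      linarith [h]
    obtain ⟨f, hf⟩ := ih hn
    set B : Finset (Fin D → Bool) := Finset.univ.biUnion (fun i : Fin n => bad D t (f i))
      with hB
    have hBcard : (B.card : ℝ) < 2 ^ D := by
      have h1 : (B.card : ℝ) ≤ ∑ i : Fin n, ((bad D t (f i)).card : ℝ) := by
        have := Finset.card_biUnion_le (s := (Finset.univ : Finset (Fin n)))
          (t := fun i => bad D t (f i))
        exact_mod_cast le_trans (Nat.cast_le.2 this) (le_of_eq (Nat.cast_sum _ _))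
      have h2 : ∑ i : Fin n, ((bad D t (f i)).card : ℝ)
          ≤ (n : ℝ) * (2 ^ (D + 1) * Real.exp (-(t ^ 2 * D / 2))) := by
        calc ∑ i : Fin n, ((bad D t (f i)).card : ℝ)
            ≤ ∑ _i : Fin n, 2 ^ (D + 1) * Real.exp (-(t ^ 2 * D / 2)) :=
              Finset.sum_le_sum fun i _ => bad_card D t ht (f i)
          _ = (n : ℝ) * (2 ^ (D + 1) * Real.exp (-(t ^ 2 * D / 2))) := by
              rw [Finset.sum_const, Finset.card_univ, Fintype.card_fin, nsmul_eq_mul]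
      have h3 : (n : ℝ) ≤ 1 / 2 * Real.exp (t ^ 2 * D / 2) - 1 := by
        have : ((n + 1 : ℕ) : ℝ) = (n : ℝ) + 1 := by push_cast; ring
        linarith [h, this.symm.le, this.le]
      have hEpos : (0:ℝ) < Real.exp (-(t ^ 2 * D / 2)) := Real.exp_pos _
      have hmul : Real.exp (t ^ 2 * D / 2) * Real.exp (-(t ^ 2 * D / 2)) = 1 := by
        rw [← Real.exp_add]; ring_nf; exact Real.exp_zero
      have h4 : (n : ℝ) * (2 ^ (D + 1) * Real.exp (-(t ^ 2 * D / 2)))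
          ≤ (1 / 2 * Real.exp (t ^ 2 * D / 2) - 1)
              * (2 ^ (D + 1) * Real.exp (-(t ^ 2 * D / 2))) := by
        apply mul_le_mul_of_nonneg_right h3 (by positivity)
      have h5 : (1 / 2 * Real.exp (t ^ 2 * D / 2) - 1)
          * (2 ^ (D + 1) * Real.exp (-(t ^ 2 * D / 2))) < 2 ^ D := by
        have hpow : (2:ℝ) ^ (D + 1) = 2 * 2 ^ D := by rw [pow_succ]; ring
        have expand : (1 / 2 * Real.exp (t ^ 2 * D / 2) - 1)
            * (2 ^ (D + 1) * Real.exp (-(t ^ 2 * D / 2)))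
            = 2 ^ D * (Real.exp (t ^ 2 * D / 2) * Real.exp (-(t ^ 2 * D / 2)))
              - 2 ^ (D + 1) * Real.exp (-(t ^ 2 * D / 2)) := by
          rw [hpow]; ring
        rw [expand, hmul]
        have : (0:ℝ) < 2 ^ (D + 1) * Real.exp (-(t ^ 2 * D / 2)) := by positivity
        linarith
      linarith [le_trans h1 h2, le_trans h4 h5.le]
    have hBne : B ≠ Finset.univ := by
      intro hEq
      have : (B.card : ℝ) = ((Finset.univ : Finset (Fin D → Bool)).card : ℝ) := by
        rw [hEq]
      rw [Finset.card_univ] at this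
      have hcu : (Fintype.card (Fin D → Bool) : ℝ) = 2 ^ D := by
        simp [Fintype.card_fun]
      rw [hcu] at this
      linarith [hBcard, this.le, this.ge]
    obtain ⟨v, hv⟩ : ∃ v, v ∉ B := by
      by_contra hc
      push_neg at hc
      exact hBne (Finset.eq_univ_iff_forall.2 hc)
    have hvgood : ∀ i : Fin n, |∑ k, sgn D (f i) k * sgn D v k| ≤ t * D := by
      intro i
      have : v ∉ bad D t (f i) := fun hmem =>
        hv (Finset.mem_biUnion.2 ⟨i, Finset.mem_univ i, hmem⟩)
      rw [bad, Finset.mem_filter] at this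
      push_neg at this
      exact this (Finset.mem_univ v)
    refine ⟨Fin.snoc f v, fun i j hij => ?_⟩
    have hsymm : ∀ a b : Fin D → Bool,
        (∑ k, sgn D a k * sgn D b k) = ∑ k, sgn D b k * sgn D a k :=
      fun a b => Finset.sum_congr rfl fun k _ => mul_comm _ _
    revert hij
    refine Fin.lastCases ?_ (fun i' => ?_) i
    · refine Fin.lastCases ?_ (fun j' => ?_) j
      · intro h'; exact absurd rfl h'
      · intro _
        simp only [Fin.snoc_last, Fin.snoc_castSucc]
        rw [hsymm]
        exact hvgood j'
    · refine Fin.lastCases ?_ (fun j' => ?_) j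
      · intro _
        simp only [Fin.snoc_last, Fin.snoc_castSucc]
        exact hvgood i'
      · intro h'
        simp only [Fin.snoc_castSucc]
        refine hf i' j' fun hEq => ?_
        exact h' (by rw [hEq])

end PackingRealStatesAux

theorem packing_real_states (D : ℕ) (hD : 3 ≤ D)
    (Δ : ℝ) (hΔ0 : 0 < Δ) (hΔ1 : Δ < 1)
    (N : ℕ) (hN : (N : ℝ) ≤ (1 / 4) * Real.exp (-(29 / 64)) * Real.exp ((D : ℝ) * Δ ^ 4 / 32)) :
    ∃ ψ : Fin N → (Fin D → ℝ),
      (∀ i, (∑ j, ψ i j ^ 2) = 1) ∧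
      ∀ i j, i ≠ j →
        1 - Δ ≤ Real.sqrt (1 - (dotProduct (ψ i) (ψ j)) ^ 2) := by
  classical
  open PackingRealStatesAux in
  set t : ℝ := Real.sqrt Δ with hts
  have ht0 : 0 ≤ t := Real.sqrt_nonneg _
  have ht2 : t ^ 2 = Δ := Real.sq_sqrt hΔ0.le
  have hDpos : (0:ℝ) < D := by exact_mod_cast lt_of_lt_of_le (by norm_num) hD
  -- N satisfies the greedy hypothesis
  have hNt : (N : ℝ) ≤ 1 / 2 * Real.exp (t ^ 2 * D / 2) := by
    have hexp1 : Real.exp (-(29 / 64 : ℝ)) ≤ 1 := by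
      rw [Real.exp_le_one_iff]; norm_num
    have hexp2 : Real.exp ((D : ℝ) * Δ ^ 4 / 32) ≤ Real.exp (t ^ 2 * D / 2) := by
      rw [Real.exp_le_exp, ht2]
      have h3 : Δ ^ 3 ≤ 1 := by nlinarith [sq_nonneg Δ, sq_nonneg (Δ - 1)]
      have : Δ ^ 4 ≤ Δ := by nlinarith
      nlinarith
    calc (N : ℝ) ≤ (1 / 4) * Real.exp (-(29 / 64)) * Real.exp ((D : ℝ) * Δ ^ 4 / 32) := hN
      _ ≤ (1 / 4) * 1 * Real.exp (t ^ 2 * D / 2) := by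
          apply mul_le_mul (by nlinarith [Real.exp_pos (-(29/64 : ℝ))]) hexp2
            (Real.exp_pos _).le (by norm_num)
      _ ≤ 1 / 2 * Real.exp (t ^ 2 * D / 2) := by
          nlinarith [Real.exp_pos (t ^ 2 * D / 2)]
  obtain ⟨f, hf⟩ := greedy D t ht0 N hNt
  set c : ℝ := (Real.sqrt D)⁻¹ with hc
  have hsD : Real.sqrt D > 0 := Real.sqrt_pos.2 hDpos
  have hc2 : c ^ 2 = (D : ℝ)⁻¹ := by
    rw [hc, inv_pow, Real.sq_sqrt hDpos.le]
  refine ⟨fun i k => sgn D (f i) k * c, ?_, ?_⟩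
  · intro i
    have : ∀ k : Fin D, (sgn D (f i) k * c) ^ 2 = c ^ 2 := by
      intro k
      rw [mul_pow, sgn_sq, one_mul]
    rw [Finset.sum_congr rfl fun k _ => this k, Finset.sum_const, Finset.card_univ,
      Fintype.card_fin, nsmul_eq_mul, hc2]
    field_simp
  · intro i j hij
    have hdot : dotProduct (fun k => sgn D (f i) k * c) (fun k => sgn D (f j) k * c)
        = c ^ 2 * ∑ k, sgn D (f i) k * sgn D (f j) k := by
      rw [dotProduct, Finset.mul_sum]
      exact Finset.sum_congr rfl fun k _ => by ring
    set S : ℝ := ∑ k, sgn D (f i) k * sgn D (f j) k with hS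
    have hSbound : |S| ≤ t * D := hf i j hij
    have habs : |c ^ 2 * S| ≤ t := by
      rw [abs_mul, abs_of_nonneg (by positivity : (0:ℝ) ≤ c ^ 2), hc2]
      calc (D : ℝ)⁻¹ * |S| ≤ (D : ℝ)⁻¹ * (t * D) := by
            apply mul_le_mul_of_nonneg_left hSbound (by positivity)
        _ = t := by field_simp
    have hsq : (c ^ 2 * S) ^ 2 ≤ Δ := by
      have h1 : (c ^ 2 * S) ^ 2 = |c ^ 2 * S| ^ 2 := (sq_abs _).symm
      rw [h1, ← ht2]
      exact pow_le_pow_left₀ (abs_nonneg _) habs 2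
    rw [hdot]
    rw [Real.le_sqrt (by linarith) (by nlinarith [sq_nonneg (c ^ 2 * S)])]
    nlinarith [sq_nonneg (c ^ 2 * S), hsq]
end

section
/- Let D ≥ 1 and Δ ∈ (0,1), and let N be a natural number with N ≤ (1/4)·e^{−1/4}·exp(DΔ⁴/16). Then there exist N unit vectors ψ₁, …, ψ_N ∈ ℂ^D such that for all i ≠ j, √(1 − |⟨ψᵢ, ψⱼ⟩|²) ≥ 1 − Δ; that is, the pairwise trace distance between the corresponding pure states is at least 1 − Δ. -/
/-!
Packing of nearly orthogonal complex pure states: for `D ≥ 1`, `Δ ∈ (0,1)` and any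
`N ≤ (1/4) e^{−1/4} exp(DΔ⁴/16)`, there exist `N` unit vectors `ψ₁, …, ψ_N ∈ ℂ^D`
whose pairwise trace distance `√(1 − |⟨ψᵢ, ψⱼ⟩|²)` is at least `1 − Δ`.
-/

open Finset Real

namespace PackingAux

def sgn (b : Bool) : ℝ := if b then 1 else -1

lemma sgn_mul (b c : Bool) : sgn b * sgn c = sgn (b == c) := by
  cases b <;> cases c <;> simp [sgn]

lemma sgn_beq (a b : Bool) : (a == (a == b)) = b := by cases a <;> cases b <;> rfl

lemma sum_exp_mul (D : ℕ) (l : ℝ) :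
    ∑ τ : Fin D → Bool, Real.exp (l * ∑ x, sgn (τ x))
      = (Real.exp l + Real.exp (-l)) ^ D := by
  have h : ∀ τ : Fin D → Bool,
      Real.exp (l * ∑ x, sgn (τ x)) = ∏ x, Real.exp (l * sgn (τ x)) := by
    intro τ; rw [← Real.exp_sum, Finset.mul_sum]
  simp_rw [h]
  rw [← Fintype.prod_sum (κ := fun _ : Fin D => Bool) (fun _ b => Real.exp (l * sgn b))]
  have h2 : ∀ x : Fin D, ∑ b : Bool, Real.exp (l * sgn b) = Real.exp l + Real.exp (-l) := by
    intro x
    rw [Fintype.sum_bool]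
    simp [sgn, add_comm]
  rw [Finset.prod_congr rfl (fun x _ => h2 x), Finset.prod_const, Finset.card_univ,
    Fintype.card_fin]

end PackingAux

namespace PackingAux
open Finset Real

lemma tail_one (D : ℕ) (t l : ℝ) (hl : 0 ≤ l) :
    ((univ.filter fun τ : Fin D → Bool => t ≤ ∑ x, sgn (τ x)).card : ℝ)
      ≤ Real.exp (-(l * t)) * (Real.exp l + Real.exp (-l)) ^ D := by
  calc ((univ.filter fun τ : Fin D → Bool => t ≤ ∑ x, sgn (τ x)).card : ℝ)
      = ∑ τ ∈ univ.filter fun τ : Fin D → Bool => t ≤ ∑ x, sgn (τ x), (1 : ℝ) := by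
        simp
    _ ≤ ∑ τ ∈ univ.filter fun τ : Fin D → Bool => t ≤ ∑ x, sgn (τ x),
          Real.exp (-(l * t)) * Real.exp (l * ∑ x, sgn (τ x)) := by
        refine Finset.sum_le_sum fun τ hτ => ?_
        rw [Finset.mem_filter] at hτ
        rw [← Real.exp_add]
        refine Real.one_le_exp ?_
        have := mul_le_mul_of_nonneg_left hτ.2 hl
        linarith
    _ ≤ ∑ τ : Fin D → Bool, Real.exp (-(l * t)) * Real.exp (l * ∑ x, sgn (τ x)) := by
        refine Finset.sum_le_sum_of_subset_of_nonneg (Finset.filter_subset _ _) ?_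
        intro τ _ _
        positivity
    _ = Real.exp (-(l * t)) * ∑ τ : Fin D → Bool, Real.exp (l * ∑ x, sgn (τ x)) := by
        rw [Finset.mul_sum]
    _ = Real.exp (-(l * t)) * (Real.exp l + Real.exp (-l)) ^ D := by
        rw [sum_exp_mul D l]

lemma tail_neg_card (D : ℕ) (t : ℝ) :
    (univ.filter fun τ : Fin D → Bool => ∑ x, sgn (τ x) ≤ -t).card
      = (univ.filter fun τ : Fin D → Bool => t ≤ ∑ x, sgn (τ x)).card := by
  refine Finset.card_nbij' (fun τ => fun x => !(τ x)) (fun τ => fun x => !(τ x)) ?_ ?_ ?_ ?_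
  · intro τ hτ
    rw [Finset.mem_coe, Finset.mem_filter] at hτ ⊢
    refine ⟨Finset.mem_univ _, ?_⟩
    have h : ∀ x : Fin D, sgn (!(τ x)) = - sgn (τ x) := by
      intro x; cases τ x <;> simp [sgn]
    simp_rw [h, Finset.sum_neg_distrib]
    linarith [hτ.2]
  · intro τ hτ
    rw [Finset.mem_coe, Finset.mem_filter] at hτ ⊢
    refine ⟨Finset.mem_univ _, ?_⟩
    have h : ∀ x : Fin D, sgn (!(τ x)) = - sgn (τ x) := by
      intro x; cases τ x <;> simp [sgn]
    simp_rw [h, Finset.sum_neg_distrib]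
    linarith [hτ.2]
  · intro τ _; funext x; simp
  · intro τ _; funext x; simp

lemma tail_two (D : ℕ) (t l : ℝ) (hl : 0 ≤ l) :
    ((univ.filter fun τ : Fin D → Bool => t ≤ |∑ x, sgn (τ x)|).card : ℝ)
      ≤ 2 * Real.exp (-(l * t)) * (Real.exp l + Real.exp (-l)) ^ D := by
  have hsub : (univ.filter fun τ : Fin D → Bool => t ≤ |∑ x, sgn (τ x)|)
      ⊆ (univ.filter fun τ : Fin D → Bool => t ≤ ∑ x, sgn (τ x))
        ∪ (univ.filter fun τ : Fin D → Bool => ∑ x, sgn (τ x) ≤ -t) := by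
    intro τ hτ
    rw [Finset.mem_filter] at hτ
    rcases le_abs.mp hτ.2 with h | h
    · exact Finset.mem_union_left _ (Finset.mem_filter.mpr ⟨Finset.mem_univ _, h⟩)
    · exact Finset.mem_union_right _ (Finset.mem_filter.mpr ⟨Finset.mem_univ _, by linarith⟩)
  calc ((univ.filter fun τ : Fin D → Bool => t ≤ |∑ x, sgn (τ x)|).card : ℝ)
      ≤ (((univ.filter fun τ : Fin D → Bool => t ≤ ∑ x, sgn (τ x))
        ∪ (univ.filter fun τ : Fin D → Bool => ∑ x, sgn (τ x) ≤ -t)).card : ℝ) := by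
        exact_mod_cast Finset.card_le_card hsub
    _ ≤ (((univ.filter fun τ : Fin D → Bool => t ≤ ∑ x, sgn (τ x)).card
        + (univ.filter fun τ : Fin D → Bool => ∑ x, sgn (τ x) ≤ -t).card : ℕ) : ℝ) := by
        exact_mod_cast Finset.card_union_le _ _
    _ = 2 * ((univ.filter fun τ : Fin D → Bool => t ≤ ∑ x, sgn (τ x)).card : ℝ) := by
        rw [tail_neg_card]; push_cast; ring
    _ ≤ 2 * (Real.exp (-(l * t)) * (Real.exp l + Real.exp (-l)) ^ D) := by
        have := tail_one D t l hl
        linarith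
    _ = 2 * Real.exp (-(l * t)) * (Real.exp l + Real.exp (-l)) ^ D := by ring

end PackingAux

namespace PackingAux
open Finset Real

lemma m_bound (D : ℕ) (a : ℝ) (ha : 0 ≤ a) :
    ((univ.filter fun τ : Fin D → Bool =>
        (D : ℝ) * Real.sqrt a ≤ |∑ x, sgn (τ x)|).card : ℝ)
      ≤ 2 * 2 ^ D * Real.exp (-((D : ℝ) * a / 2)) := by
  have hl : (0 : ℝ) ≤ Real.sqrt a := Real.sqrt_nonneg a
  have h := tail_two D ((D : ℝ) * Real.sqrt a) (Real.sqrt a) hl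
  have hsq : Real.sqrt a * ((D : ℝ) * Real.sqrt a) = (D : ℝ) * a := by
    rw [show Real.sqrt a * ((D : ℝ) * Real.sqrt a)
        = (D : ℝ) * (Real.sqrt a * Real.sqrt a) from by ring, Real.mul_self_sqrt ha]
  have hcosh : (Real.exp (Real.sqrt a) + Real.exp (-(Real.sqrt a))) ^ D
      ≤ (2 : ℝ) ^ D * Real.exp ((D : ℝ) * a / 2) := by
    have h1 : Real.exp (Real.sqrt a) + Real.exp (-(Real.sqrt a))
        = 2 * Real.cosh (Real.sqrt a) := by
      rw [Real.cosh_eq]; ring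
    have h2 : Real.cosh (Real.sqrt a) ≤ Real.exp (a / 2) := by
      have := Real.cosh_le_exp_half_sq (Real.sqrt a)
      rwa [Real.sq_sqrt ha] at this
    calc (Real.exp (Real.sqrt a) + Real.exp (-(Real.sqrt a))) ^ D
        = (2 * Real.cosh (Real.sqrt a)) ^ D := by rw [h1]
      _ ≤ (2 * Real.exp (a / 2)) ^ D := by
          refine pow_le_pow_left₀ (by positivity) (by linarith) D
      _ = (2 : ℝ) ^ D * Real.exp (a / 2) ^ D := by rw [mul_pow]
      _ = (2 : ℝ) ^ D * Real.exp ((D : ℝ) * a / 2) := by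
          rw [← Real.exp_nat_mul]; ring_nf
  calc ((univ.filter fun τ : Fin D → Bool =>
        (D : ℝ) * Real.sqrt a ≤ |∑ x, sgn (τ x)|).card : ℝ)
      ≤ 2 * Real.exp (-(Real.sqrt a * ((D : ℝ) * Real.sqrt a)))
          * (Real.exp (Real.sqrt a) + Real.exp (-(Real.sqrt a))) ^ D := h
    _ ≤ 2 * Real.exp (-((D : ℝ) * a)) * ((2 : ℝ) ^ D * Real.exp ((D : ℝ) * a / 2)) := by
        rw [hsq]
        refine mul_le_mul_of_nonneg_left hcosh (by positivity)
    _ = 2 * 2 ^ D * (Real.exp (-((D : ℝ) * a)) * Real.exp ((D : ℝ) * a / 2)) := by ring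
    _ = 2 * 2 ^ D * Real.exp (-((D : ℝ) * a / 2)) := by
        rw [← Real.exp_add]; ring_nf

lemma count_eval {N D : ℕ} (j : Fin N) (Q : (Fin D → Bool) → Prop) [DecidablePred Q] :
    ((univ.filter fun σ : Fin N → Fin D → Bool => Q (σ j)).card) * 2 ^ D
      = (univ.filter Q).card * Fintype.card (Fin N → Fin D → Bool) := by
  classical
  have h1 : (univ.filter fun σ : Fin N → Fin D → Bool => Q (σ j)).card
      = Fintype.card {σ : Fin N → Fin D → Bool // Q (σ j)} := (Fintype.card_subtype _).symm
  have h2 : Fintype.card {σ : Fin N → Fin D → Bool // Q (σ j)}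
      = Fintype.card {p : (Fin D → Bool) × ({k : Fin N // k ≠ j} → (Fin D → Bool)) // Q p.1} := by
    refine Fintype.card_congr ((Equiv.funSplitAt j (Fin D → Bool)).subtypeEquiv fun σ => ?_)
    exact Iff.rfl
  have h3 : Fintype.card {p : (Fin D → Bool) × ({k : Fin N // k ≠ j} → (Fin D → Bool)) // Q p.1}
      = Fintype.card ({v : Fin D → Bool // Q v} × ({k : Fin N // k ≠ j} → (Fin D → Bool))) :=
    Fintype.card_congr (Equiv.prodSubtypeFstEquivSubtypeProd (p := Q))
  have h4 : Fintype.card ({v : Fin D → Bool // Q v} × ({k : Fin N // k ≠ j} → (Fin D → Bool)))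
      = (univ.filter Q).card * Fintype.card ({k : Fin N // k ≠ j} → (Fin D → Bool)) := by
    rw [Fintype.card_prod, Fintype.card_subtype]
  have h5 : Fintype.card (Fin N → Fin D → Bool)
      = 2 ^ D * Fintype.card ({k : Fin N // k ≠ j} → (Fin D → Bool)) := by
    rw [Fintype.card_congr (Equiv.funSplitAt j (Fin D → Bool)), Fintype.card_prod]
    congr 1
    simp
  rw [h1, h2, h3, h4, h5]
  ring

end PackingAux

namespace PackingAux
open Finset Real

lemma exists_good (D N : ℕ) (t : ℝ)
    (hm : (N : ℝ) ^ 2 * ((univ.filter fun τ : Fin D → Bool => t ≤ |∑ x, sgn (τ x)|).card : ℝ)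
      < 2 ^ D) :
    ∃ σ : Fin N → Fin D → Bool,
      ∀ i j : Fin N, i ≠ j → |∑ x, sgn (σ i x) * sgn (σ j x)| < t := by
  classical
  by_contra hcon
  push_neg at hcon
  -- every σ lies in some bad set
  set m : ℕ := (univ.filter fun τ : Fin D → Bool => t ≤ |∑ x, sgn (τ x)|).card with hm_def
  have hsub : (univ : Finset (Fin N → Fin D → Bool))
      ⊆ (univ : Finset (Fin N)).offDiag.biUnion
        (fun p => univ.filter fun σ : Fin N → Fin D → Bool =>
          t ≤ |∑ x, sgn (σ p.1 x) * sgn (σ p.2 x)|) := by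
    intro σ _
    obtain ⟨i, j, hij, hbad⟩ := hcon σ
    refine Finset.mem_biUnion.mpr ⟨⟨i, j⟩, Finset.mem_offDiag.mpr ⟨mem_univ _, mem_univ _, hij⟩, ?_⟩
    exact Finset.mem_filter.mpr ⟨mem_univ _, hbad⟩
  -- each bad set has card m * |Ω| / 2^D
  have hbadcard : ∀ i j : Fin N, i ≠ j →
      (univ.filter fun σ : Fin N → Fin D → Bool =>
        t ≤ |∑ x, sgn (σ i x) * sgn (σ j x)|).card
      = (univ.filter fun σ : Fin N → Fin D → Bool =>
        t ≤ |∑ x, sgn (σ j x)|).card := by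
    intro i j hij
    set u : (Fin N → Fin D → Bool) → (Fin N → Fin D → Bool) :=
      fun σ => Function.update σ j (fun x => σ i x == σ j x) with hu
    have hui : ∀ σ, u σ i = σ i := fun σ => Function.update_of_ne hij _ _
    have huj : ∀ σ, u σ j = fun x => σ i x == σ j x := fun σ => Function.update_self _ _ _
    have huu : ∀ σ, u (u σ) = σ := by
      intro σ
      funext k
      by_cases hk : k = j
      · subst hk
        rw [huj]
        funext x
        rw [hui, huj]
        exact sgn_beq _ _
      · simp only [u, Function.update_of_ne hk]
    refine Finset.card_nbij' u u ?_ ?_ ?_ ?_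
    · intro σ hσ
      rw [Finset.mem_coe, Finset.mem_filter] at hσ ⊢
      refine ⟨mem_univ _, ?_⟩
      have : ∀ x, sgn (u σ j x) = sgn (σ i x) * sgn (σ j x) := by
        intro x; rw [huj]; exact (sgn_mul _ _).symm
      simp_rw [this]
      exact hσ.2
    · intro σ hσ
      rw [Finset.mem_coe, Finset.mem_filter] at hσ ⊢
      refine ⟨mem_univ _, ?_⟩
      have : ∀ x, sgn (u σ i x) * sgn (u σ j x) = sgn (σ j x) := by
        intro x
        rw [hui, huj, sgn_mul]
        congr 1
        exact sgn_beq _ _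
      simp_rw [this]
      exact hσ.2
    · intro σ _; exact huu σ
    · intro σ _; exact huu σ
  -- counting
  have hcount : ∀ j : Fin N,
      (univ.filter fun σ : Fin N → Fin D → Bool => t ≤ |∑ x, sgn (σ j x)|).card * 2 ^ D
      = m * Fintype.card (Fin N → Fin D → Bool) :=
    fun j => count_eval j (fun τ => t ≤ |∑ x, sgn (τ x)|)
  have h0 : (univ : Finset (Fin N → Fin D → Bool)).card
      ≤ ∑ p ∈ (univ : Finset (Fin N)).offDiag,
        (univ.filter fun σ : Fin N → Fin D → Bool =>
          t ≤ |∑ x, sgn (σ p.1 x) * sgn (σ p.2 x)|).card :=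
    le_trans (Finset.card_le_card hsub) (Finset.card_biUnion_le)
  have h1 : Fintype.card (Fin N → Fin D → Bool) * 2 ^ D
      ≤ N ^ 2 * m * Fintype.card (Fin N → Fin D → Bool) := by
    calc Fintype.card (Fin N → Fin D → Bool) * 2 ^ D
        = (univ : Finset (Fin N → Fin D → Bool)).card * 2 ^ D := by rw [Finset.card_univ]
      _ ≤ (∑ p ∈ (univ : Finset (Fin N)).offDiag,
            (univ.filter fun σ : Fin N → Fin D → Bool =>
              t ≤ |∑ x, sgn (σ p.1 x) * sgn (σ p.2 x)|).card) * 2 ^ D :=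
          Nat.mul_le_mul_right _ h0
      _ = ∑ p ∈ (univ : Finset (Fin N)).offDiag,
            ((univ.filter fun σ : Fin N → Fin D → Bool =>
              t ≤ |∑ x, sgn (σ p.1 x) * sgn (σ p.2 x)|).card * 2 ^ D) := Finset.sum_mul _ _ _
      _ = ∑ _p ∈ (univ : Finset (Fin N)).offDiag,
            (m * Fintype.card (Fin N → Fin D → Bool)) := by
          refine Finset.sum_congr rfl fun p hp => ?_
          obtain ⟨-, -, hij⟩ := Finset.mem_offDiag.mp hp
          rw [hbadcard p.1 p.2 hij, hcount p.2]
      _ = (univ : Finset (Fin N)).offDiag.card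
            * (m * Fintype.card (Fin N → Fin D → Bool)) := Finset.sum_const _
      _ ≤ N ^ 2 * (m * Fintype.card (Fin N → Fin D → Bool)) := by
          refine Nat.mul_le_mul_right _ ?_
          rw [Finset.offDiag_card, Finset.card_univ, Fintype.card_fin]
          calc N * N - N ≤ N * N := Nat.sub_le _ _
            _ = N ^ 2 := (sq N).symm
      _ = N ^ 2 * m * Fintype.card (Fin N → Fin D → Bool) := by ring
  have hpos : 0 < Fintype.card (Fin N → Fin D → Bool) := Fintype.card_pos
  have h2 : 2 ^ D ≤ N ^ 2 * m := by
    have := h1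
    rw [mul_comm (Fintype.card (Fin N → Fin D → Bool)) (2 ^ D)] at this
    rw [mul_comm (2 ^ D) (Fintype.card (Fin N → Fin D → Bool)),
      mul_comm (N ^ 2 * m) (Fintype.card (Fin N → Fin D → Bool))] at this
    exact Nat.le_of_mul_le_mul_left this hpos
  have h3 : ((2 : ℝ) ^ D : ℝ) ≤ (N : ℝ) ^ 2 * (m : ℝ) := by exact_mod_cast h2
  linarith

end PackingAux

open Finset PackingAux

theorem packing_complex_states (D : ℕ) (hD : 1 ≤ D)
    (Δ : ℝ) (hΔ0 : 0 < Δ) (hΔ1 : Δ < 1)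
    (N : ℕ) (hN : (N : ℝ) ≤ (1 / 4) * Real.exp (-(1 / 4)) * Real.exp ((D : ℝ) * Δ ^ 4 / 16)) :
    ∃ ψ : Fin N → (Fin D → ℂ),
      (∀ i, (∑ j, ‖ψ i j‖ ^ 2) = 1) ∧
      ∀ i j, i ≠ j →
        1 - Δ ≤ Real.sqrt (1 - ‖dotProduct (star (ψ i)) (ψ j)‖ ^ 2) := by
  classical
  -- numeric bound
  have hN0 : (0 : ℝ) ≤ (N : ℝ) := Nat.cast_nonneg N
  have hNsq : (N : ℝ) ^ 2 ≤ (1 / 16) * Real.exp (-(1 / 2)) * Real.exp ((D : ℝ) * Δ ^ 4 / 8) := by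
    calc (N : ℝ) ^ 2 = (N : ℝ) * (N : ℝ) := sq (N : ℝ)
      _ ≤ ((1 / 4) * Real.exp (-(1 / 4)) * Real.exp ((D : ℝ) * Δ ^ 4 / 16))
          * ((1 / 4) * Real.exp (-(1 / 4)) * Real.exp ((D : ℝ) * Δ ^ 4 / 16)) :=
          mul_le_mul hN hN hN0 (by positivity)
      _ = (1 / 16) * (Real.exp (-(1 / 4)) * Real.exp (-(1 / 4)))
          * (Real.exp ((D : ℝ) * Δ ^ 4 / 16) * Real.exp ((D : ℝ) * Δ ^ 4 / 16)) := by ring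
      _ = (1 / 16) * Real.exp (-(1 / 2)) * Real.exp ((D : ℝ) * Δ ^ 4 / 8) := by
          rw [← Real.exp_add, ← Real.exp_add]
          norm_num
          ring
  have key : 2 * (N : ℝ) ^ 2 * Real.exp (-((D : ℝ) * Δ / 2)) < 1 := by
    have hexp1 : Real.exp ((D : ℝ) * Δ ^ 4 / 8) * Real.exp (-((D : ℝ) * Δ / 2)) ≤ 1 := by
      rw [← Real.exp_add]
      refine Real.exp_le_one_iff.mpr ?_
      have hD0 : (0 : ℝ) ≤ (D : ℝ) := Nat.cast_nonneg D
      have h4 : Δ ^ 4 ≤ Δ := by nlinarith [pow_le_one₀ hΔ0.le hΔ1.le (n := 3)]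
      nlinarith
    have hexp2 : Real.exp (-(1 / 2)) ≤ 1 := Real.exp_le_one_iff.mpr (by norm_num)
    have he0 : (0 : ℝ) < Real.exp (-((D : ℝ) * Δ / 2)) := Real.exp_pos _
    calc 2 * (N : ℝ) ^ 2 * Real.exp (-((D : ℝ) * Δ / 2))
        ≤ 2 * ((1 / 16) * Real.exp (-(1 / 2)) * Real.exp ((D : ℝ) * Δ ^ 4 / 8))
          * Real.exp (-((D : ℝ) * Δ / 2)) := by
          have := mul_le_mul_of_nonneg_right hNsq he0.le
          nlinarith
      _ = (1 / 8) * Real.exp (-(1 / 2))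
          * (Real.exp ((D : ℝ) * Δ ^ 4 / 8) * Real.exp (-((D : ℝ) * Δ / 2))) := by ring
      _ ≤ (1 / 8) * 1 * 1 := by
          have h8 : (0:ℝ) < 1/8 := by norm_num
          nlinarith [Real.exp_pos (-(1/2) : ℝ), Real.exp_pos ((D : ℝ) * Δ ^ 4 / 8),
            Real.exp_pos (-((D : ℝ) * Δ / 2))]
      _ < 1 := by norm_num
  have hm' := m_bound D Δ hΔ0.le
  have hfin : (N : ℝ) ^ 2 * ((univ.filter fun τ : Fin D → Bool =>
      (D : ℝ) * Real.sqrt Δ ≤ |∑ x, sgn (τ x)|).card : ℝ) < 2 ^ D := by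
    have h2D : (0 : ℝ) < 2 ^ D := by positivity
    calc (N : ℝ) ^ 2 * ((univ.filter fun τ : Fin D → Bool =>
        (D : ℝ) * Real.sqrt Δ ≤ |∑ x, sgn (τ x)|).card : ℝ)
        ≤ (N : ℝ) ^ 2 * (2 * 2 ^ D * Real.exp (-((D : ℝ) * Δ / 2))) :=
          mul_le_mul_of_nonneg_left hm' (by positivity)
      _ = (2 * (N : ℝ) ^ 2 * Real.exp (-((D : ℝ) * Δ / 2))) * 2 ^ D := by ring
      _ < 1 * 2 ^ D := mul_lt_mul_of_pos_right key h2D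
      _ = 2 ^ D := one_mul _
  obtain ⟨σ, hσ⟩ := exists_good D N ((D : ℝ) * Real.sqrt Δ) hfin
  -- construct the states
  have hD0 : (0 : ℝ) < (D : ℝ) := by exact_mod_cast hD
  refine ⟨fun i => fun x => ((sgn (σ i x) / Real.sqrt (D : ℝ) : ℝ) : ℂ), ?_, ?_⟩
  · intro i
    have hterm : ∀ x : Fin D, ‖((sgn (σ i x) / Real.sqrt (D : ℝ) : ℝ) : ℂ)‖ ^ 2
        = 1 / (D : ℝ) := by
      intro x
      rw [Complex.norm_real, Real.norm_eq_abs, abs_div, div_pow, sq_abs, sq_abs, Real.sq_sqrt hD0.le]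
      congr 1
      cases σ i x <;> simp [sgn]
    simp_rw [hterm]
    rw [Finset.sum_const, Finset.card_univ, Fintype.card_fin, nsmul_eq_mul]
    field_simp
  · intro i j hij
    have hdot : dotProduct (star (fun x => ((sgn (σ i x) / Real.sqrt (D : ℝ) : ℝ) : ℂ)))
          (fun x => ((sgn (σ j x) / Real.sqrt (D : ℝ) : ℝ) : ℂ))
        = (((∑ x, sgn (σ i x) * sgn (σ j x)) / (D : ℝ) : ℝ) : ℂ) := by
      unfold dotProduct
      push_cast
      rw [Finset.sum_div]
      refine Finset.sum_congr rfl fun x _ => ?_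
      simp only [Pi.star_apply]
      rw [← Complex.ofReal_div, Complex.star_def, Complex.conj_ofReal, ← Complex.ofReal_div,
        ← Complex.ofReal_mul]
      rw [show sgn (σ i x) / Real.sqrt (D : ℝ) * (sgn (σ j x) / Real.sqrt (D : ℝ))
          = sgn (σ i x) * sgn (σ j x) / (Real.sqrt (D : ℝ) * Real.sqrt (D : ℝ)) from by ring,
        Real.mul_self_sqrt hD0.le]
      push_cast
      ring
    rw [hdot, Complex.norm_real, Real.norm_eq_abs]
    have hS := hσ i j hij
    have habs : |(∑ x, sgn (σ i x) * sgn (σ j x)) / (D : ℝ)| < Real.sqrt Δ := by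
      rw [abs_div, abs_of_pos hD0, div_lt_iff₀ hD0]
      calc |∑ x, sgn (σ i x) * sgn (σ j x)| < (D : ℝ) * Real.sqrt Δ := hS
        _ = Real.sqrt Δ * (D : ℝ) := mul_comm _ _
    have hsq : |(∑ x, sgn (σ i x) * sgn (σ j x)) / (D : ℝ)| ^ 2 ≤ Δ := by
      have h1 : |(∑ x, sgn (σ i x) * sgn (σ j x)) / (D : ℝ)| ^ 2 ≤ Real.sqrt Δ ^ 2 := by
        refine pow_le_pow_left₀ (abs_nonneg _) habs.le 2
      rwa [Real.sq_sqrt hΔ0.le] at h1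
    have h2 : (1 - Δ) ^ 2 ≤ 1 - |(∑ x, sgn (σ i x) * sgn (σ j x)) / (D : ℝ)| ^ 2 := by
      nlinarith
    calc 1 - Δ = Real.sqrt ((1 - Δ) ^ 2) := (Real.sqrt_sq (by linarith)).symm
      _ ≤ Real.sqrt (1 - |(∑ x, sgn (σ i x) * sgn (σ j x)) / (D : ℝ)| ^ 2) :=
          Real.sqrt_le_sqrt h2
end
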